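/- arXiv:1308.4361 — 4 statements merged into one kernel-verified Lean document; each statement's English description precedes it below -/
import Mathlib

section
/- Let n ≥ 2 and ν > 0, and set J_ν(x,ρ) = ∫_{S^{n−1}} ⟨x − ρθ⟩^{−ν} dS(θ) for x ∈ ℝ^n and ρ ≥ 0. Then there is a constant C (depending on n, ν) such that: if ν < n−1 then J_ν(x,ρ) ≤ C ⟨ρ + |x|⟩^{−ν} for all x ∈ ℝ^n and ρ ≥ 0; and if ν = n−1 then J_ν(x,ρ) ≤ C ⟨ρ + |x|⟩^{−ν} log(2⟨ρ⟩ + |x|) for all x ∈ ℝ^n and ρ ≥ 0. -/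
set_option autoImplicit false

open MeasureTheory Metric Set
open scoped ENNReal NNReal

noncomputable section

/-- Euclidean space ℝⁿ. -/
abbrev Euc (n : ℕ) := EuclideanSpace ℝ (Fin n)

/-- The surface measure on the unit sphere `S^{n-1} ⊆ ℝⁿ`. -/
def sphMeasure (n : ℕ) : Measure (sphere (0 : Euc n) 1) :=
  (volume : Measure (Euc n)).toSphere

/-- The Japanese bracket `⟨x⟩ = (1 + |x|²)^{1/2}`. -/
def jap {E : Type*} [SeminormedAddGroup E] (x : E) : ℝ :=
  Real.sqrt (1 + ‖x‖ ^ 2)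

/-- The angular integral `J_ν(x,ρ) = ∫_{S^{n-1}} ⟨x - ρθ⟩^{-ν} dS(θ)`. -/
def Jnu (n : ℕ) (ν : ℝ) (x : Euc n) (ρ : ℝ) : ℝ :=
  ∫ θ : sphere (0 : Euc n) 1, jap (x - ρ • (θ : Euc n)) ^ (-ν) ∂(sphMeasure n)

/-!
Split the sphere according to the dyadic size `2 ^ k` of `|x - ρθ|`. For `r ≥ 1` the cap
`{θ : |x - ρθ| ≤ r}` has measure `≲ (r / ⟨ρ + |x|⟩) ^ (n - 1)`: either `r ≳ ⟨ρ + |x|⟩` and this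
is trivial, or the cap is nonempty only if `r < ρ ≈ ⟨ρ + |x|⟩`; then the part of the cone over
the cap with radii in `[ρ - r, ρ)` lies in the ball `B(x, 2r)`, while its volume is at least
`r ρ ^ (n - 1) / n` times the measure of the cap. On the scales `2 ^ k ≤ 2⟨ρ + |x|⟩` this gives
`J_ν ≲ ⟨ρ + |x|⟩ ^ (-ν) ∑ₖ (2 ^ k / ⟨ρ + |x|⟩) ^ (n - 1 - ν)`, and the kernel is
`≲ ⟨ρ + |x|⟩ ^ (-ν)` on the remaining scales. The sum is geometric and dominated by its last
term when `ν < n - 1`; when `ν = n - 1` it has `≈ log ⟨ρ + |x|⟩` terms equal to one.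
-/

open scoped Pointwise

lemma one_le_jap {E : Type*} [SeminormedAddGroup E] (x : E) : 1 ≤ jap x :=
  Real.one_le_sqrt.2 (le_add_of_nonneg_right (sq_nonneg _))

lemma norm_le_jap {E : Type*} [SeminormedAddGroup E] (x : E) : ‖x‖ ≤ jap x :=
  Real.le_sqrt_of_sq_le (le_add_of_nonneg_left zero_le_one)

lemma jap_pos {E : Type*} [SeminormedAddGroup E] (x : E) : 0 < jap x :=
  zero_lt_one.trans_le (one_le_jap x)

lemma jap_le_one_add {a : ℝ} (ha : 0 ≤ a) : jap a ≤ 1 + a :=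
  Real.sqrt_le_iff.2 ⟨by linarith, by rw [Real.norm_of_nonneg ha]; nlinarith⟩

lemma exists_two_pow_between (t : ℝ) : ∃ k : ℕ, t ≤ 2 ^ k ∧ (2 : ℝ) ^ k ≤ max (2 * t) 1 := by
  rcases le_or_gt t 1 with ht | ht
  · exact ⟨0, by simpa using ht, by simp⟩
  · obtain ⟨k, hk, hk'⟩ := exists_nat_pow_near ht.le one_lt_two
    exact ⟨k + 1, hk'.le, le_max_of_le_left (by rw [pow_succ']; linarith)⟩

/-- `s ^ (-ν)` is dominated by the term of the first dyadic scale `2 ^ k ≥ t` when `k < K`,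
and by `(R / 2) ^ (-ν)` otherwise. -/
lemma rpow_neg_le_add_sum_dyadic {ν s t R : ℝ} {K : ℕ} (hν : 0 ≤ ν) (hs : 1 ≤ s)
    (hts : t ≤ s) (hR : 0 < R) (hRK : R ≤ 2 ^ K) :
    s ^ (-ν) ≤ (R / 2) ^ (-ν) +
      ∑ k ∈ Finset.range K, if t ≤ 2 ^ k then ((2 : ℝ) ^ k / 2) ^ (-ν) else 0 := by
  obtain ⟨k, htk, hk⟩ := exists_two_pow_between t
  have hks : (2 : ℝ) ^ k / 2 ≤ s := by
    rw [div_le_iff₀ two_pos]; exact hk.trans (max_le (by linarith) (by linarith))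
  have hterms : ∀ j ∈ Finset.range K,
      0 ≤ if t ≤ 2 ^ j then ((2 : ℝ) ^ j / 2) ^ (-ν) else 0 := fun j _ => by
    split_ifs <;> positivity
  have hRν : 0 ≤ (R / 2) ^ (-ν) := by positivity
  rcases lt_or_ge k K with hkK | hKk
  · have hle := Finset.single_le_sum hterms (Finset.mem_range.2 hkK)
    rw [if_pos htk] at hle
    linarith [Real.rpow_le_rpow_of_nonpos (by positivity) hks (neg_nonpos.2 hν)]
  · have hRs : R / 2 ≤ s := by
      calc R / 2 ≤ 2 ^ K / 2 := by gcongr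
        _ ≤ 2 ^ k / 2 := by gcongr; exact one_le_two
        _ ≤ s := hks
    linarith [Real.rpow_le_rpow_of_nonpos (by positivity) hRs (neg_nonpos.2 hν),
      Finset.sum_nonneg hterms]

lemma div_two_rpow_neg {a : ℝ} (ha : 0 ≤ a) (ν : ℝ) : (a / 2) ^ (-ν) = 2 ^ ν * a ^ (-ν) := by
  rw [Real.div_rpow ha zero_le_two, Real.rpow_neg zero_le_two, div_inv_eq_mul, mul_comm]

lemma div_two_rpow_neg_mul_pow {a R : ℝ} (ha : 0 < a) (hR : 0 < R) (ν : ℝ) (D : ℕ) :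
    (a / 2) ^ (-ν) * (a / R) ^ D = 2 ^ ν * R ^ (-ν) * (a / R) ^ ((D : ℝ) - ν) := by
  rw [div_two_rpow_neg ha.le, Real.rpow_sub (div_pos ha hR), Real.rpow_natCast,
    Real.div_rpow ha.le hR.le, Real.rpow_neg ha.le, Real.rpow_neg hR.le]
  have := Real.rpow_pos_of_pos ha ν
  have := Real.rpow_pos_of_pos hR ν
  field_simp

lemma sum_range_two_pow_div_rpow_le {e R : ℝ} {K : ℕ} (he : 0 < e) (hR : 0 < R)
    (hK : (2 : ℝ) ^ K ≤ 2 * R) :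
    ∑ k ∈ Finset.range K, ((2 : ℝ) ^ k / R) ^ e ≤ 2 ^ e / (2 ^ e - 1) := by
  have hq : 1 < (2 : ℝ) ^ e := Real.one_lt_rpow one_lt_two he
  have hRe := Real.rpow_pos_of_pos hR e
  have hterm : ∀ k : ℕ, ((2 : ℝ) ^ k / R) ^ e = ((2 : ℝ) ^ e) ^ k / R ^ e := fun k => by
    rw [Real.div_rpow (by positivity) hR.le, Real.rpow_pow_comm zero_le_two]
  have hKe : ((2 : ℝ) ^ e) ^ K ≤ 2 ^ e * R ^ e := by
    rw [Real.rpow_pow_comm zero_le_two, ← Real.mul_rpow zero_le_two hR.le]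
    exact Real.rpow_le_rpow (by positivity) hK he.le
  simp_rw [hterm, ← Finset.sum_div, geom_sum_eq hq.ne']
  rw [div_div, div_le_div_iff₀ (by nlinarith) (by linarith)]
  nlinarith

lemma natCast_add_one_le_log_div_log_two {K : ℕ} {R B : ℝ} (hB : 2 ≤ B) (hRB : R ≤ B)
    (hK : (2 : ℝ) ^ K ≤ 2 * R) : (K : ℝ) + 1 ≤ 3 * Real.log B / Real.log 2 := by
  have hKlog : Real.log (2 ^ K) ≤ Real.log (B ^ 2) :=
    Real.log_le_log (by positivity) (by nlinarith)
  rw [Real.log_pow, Real.log_pow, Nat.cast_ofNat] at hKlog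
  rw [le_div_iff₀ (Real.log_pos one_lt_two)]
  linarith [Real.log_le_log two_pos hB]

section SphereCap

variable {E : Type*} [NormedAddCommGroup E] [NormedSpace ℝ E]

def sphereCap (x : E) (ρ r : ℝ) : Set (sphere (0 : E) 1) :=
  {θ | ‖x - ρ • (θ : E)‖ ≤ r}

lemma measurableSet_sphereCap [MeasurableSpace E] [BorelSpace E] (x : E) (ρ r : ℝ) :
    MeasurableSet (sphereCap x ρ r) :=
  (isClosed_le (by fun_prop) continuous_const).measurableSet

lemma norm_le_add_of_mem_sphereCap {x : E} {ρ r : ℝ} (hρ : 0 ≤ ρ) {θ : sphere (0 : E) 1}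
    (hθ : θ ∈ sphereCap x ρ r) : ‖x‖ ≤ ρ + r := by
  have hρθ : ‖ρ • (θ : E)‖ = ρ := by simp [norm_smul, abs_of_nonneg hρ]
  have : ‖x - ρ • (θ : E)‖ ≤ r := hθ
  linarith [norm_le_norm_add_norm_sub' x (ρ • (θ : E))]

lemma Ioo_smul_sphereCap_subset (x : E) (ρ r : ℝ) :
    Ioo (0 : ℝ) ρ • ((↑) '' sphereCap x ρ r : Set E) ⊆
      Ioo (0 : ℝ) (ρ - r) • ((↑) '' sphereCap x ρ r) ∪ closedBall x (2 * r) := by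
  rintro _ ⟨t, ⟨ht0, htρ⟩, _, ⟨θ, hθ, rfl⟩, rfl⟩
  rcases lt_or_ge t (ρ - r) with htr | htr
  · exact Or.inl ⟨t, ⟨ht0, htr⟩, θ, ⟨θ, hθ, rfl⟩, rfl⟩
  · refine Or.inr (mem_closedBall.2 ?_)
    have hθ1 : ‖(θ : E)‖ = 1 := by simp
    calc dist (t • (θ : E)) x ≤ ‖t • (θ : E) - ρ • (θ : E)‖ + ‖x - ρ • (θ : E)‖ := by
          rw [dist_eq_norm, ← norm_neg (x - _)]
          exact (norm_add_le _ _).trans_eq' (by abel_nf)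
      _ ≤ r + r := by
          rw [← sub_smul, norm_smul, hθ1, mul_one, Real.norm_of_nonpos (by linarith)]
          exact add_le_add (by linarith) hθ
      _ = 2 * r := by ring

variable [FiniteDimensional ℝ E] [MeasurableSpace E] (μ : Measure E) [μ.IsAddHaarMeasure]

lemma addHaar_Ioo_smul_ne_top (s : ℝ) {S : Set E} (hS : S ⊆ sphere 0 1) :
    μ (Ioo (0 : ℝ) s • S) ≠ ∞ := by
  refine ne_top_of_le_ne_top (measure_ball_lt_top (x := 0) (r := s * 1)).ne (measure_mono ?_)
  calc Ioo (0 : ℝ) s • S ⊆ Ioo (0 : ℝ) s • sphere (0 : E) 1 := smul_subset_smul_left hS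
    _ ⊆ ball 0 (s * 1) := by rw [Ioo_smul_sphere_zero le_rfl one_pos]; exact sdiff_subset

lemma addHaar_real_Ioo_smul_sphereCap_le (x : E) (ρ r : ℝ) :
    μ.real (Ioo (0 : ℝ) ρ • ((↑) '' sphereCap x ρ r : Set E)) ≤
      μ.real (Ioo (0 : ℝ) (ρ - r) • ((↑) '' sphereCap x ρ r : Set E)) +
        μ.real (closedBall x (2 * r)) :=
  (measureReal_mono (Ioo_smul_sphereCap_subset x ρ r) (measure_union_ne_top
    (addHaar_Ioo_smul_ne_top μ _ (Subtype.coe_image_subset _ _))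
    measure_closedBall_lt_top.ne)).trans (measureReal_union_le _ _)

variable [BorelSpace E]

lemma addHaar_real_Ioo_smul {s : ℝ} (hs : 0 < s) (S : Set E) :
    μ.real (Ioo (0 : ℝ) s • S) = s ^ Module.finrank ℝ E * μ.real (Ioo (0 : ℝ) 1 • S) := by
  have hIoo : Ioo (0 : ℝ) s = s • Ioo (0 : ℝ) 1 := by
    rw [LinearOrderedField.smul_Ioo hs, mul_zero, mul_one]
  rw [measureReal_def, measureReal_def, hIoo, smul_assoc, μ.addHaar_smul_of_nonneg hs.le,
    ENNReal.toReal_mul, ENNReal.toReal_ofReal (by positivity)]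

lemma toSphere_real_sphereCap_le [Nontrivial E] (x : E) {ρ r : ℝ} (hr : 0 < r) (hrρ : r < ρ) :
    μ.toSphere.real (sphereCap x ρ r) ≤
      Module.finrank ℝ E * 2 ^ Module.finrank ℝ E * μ.real (ball 0 1) *
        (r / ρ) ^ (Module.finrank ℝ E - 1) := by
  set d := Module.finrank ℝ E
  obtain ⟨D, hD⟩ : ∃ D, d = D + 1 := Nat.exists_eq_succ_of_ne_zero Module.finrank_pos.ne'
  set V := μ.real (ball (0 : E) 1)
  set m := μ.real (Ioo (0 : ℝ) 1 • ((↑) '' sphereCap x ρ r : Set E))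
  have hm : 0 ≤ m := measureReal_nonneg
  have hσ : μ.toSphere.real (sphereCap x ρ r) = d * m := by
    simp [measureReal_def, μ.toSphere_apply' (measurableSet_sphereCap x ρ r), m, d]
  have hshell : ρ ^ d * m ≤ (ρ - r) ^ d * m + (2 * r) ^ d * V := by
    have := addHaar_real_Ioo_smul_sphereCap_le μ x ρ r
    rwa [addHaar_real_Ioo_smul μ (s := ρ) (by linarith),
      addHaar_real_Ioo_smul μ (s := ρ - r) (by linarith),
      μ.addHaar_real_closedBall x (by linarith)] at this
  have hm_le : ρ ^ D * m ≤ 2 ^ d * V * r ^ D := by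
    have hpow : (ρ - r) ^ d ≤ ρ ^ D * (ρ - r) := by
      rw [hD, pow_succ]; gcongr; linarith
    have h1 : ρ ^ d * m = ρ ^ D * ρ * m := by rw [hD, pow_succ]
    have h2 : (2 * r) ^ d * V = r * (2 ^ d * V * r ^ D) := by rw [mul_pow, hD, pow_succ r]; ring
    refine le_of_mul_le_mul_left ?_ hr
    nlinarith [mul_le_mul_of_nonneg_right hpow hm]
  rw [hσ, hD, Nat.add_sub_cancel, ← hD, div_pow]
  calc (d : ℝ) * m ≤ d * (2 ^ d * V * r ^ D / ρ ^ D) := by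
        gcongr
        rw [le_div_iff₀ (pow_pos (hr.trans hrρ) D)]
        linarith
    _ = _ := by ring

lemma exists_toSphere_real_sphereCap_le [Nontrivial E] :
    ∃ C, 0 < C ∧ ∀ (x : E) (ρ r : ℝ), 0 ≤ ρ → 1 ≤ r →
      μ.toSphere.real (sphereCap x ρ r) ≤
        C * (r / jap (ρ + ‖x‖)) ^ (Module.finrank ℝ E - 1) := by
  set d := Module.finrank ℝ E
  set M := μ.toSphere.real univ
  set B := d * 2 ^ d * μ.real (ball (0 : E) 1)
  have hM : 0 ≤ M := measureReal_nonneg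
  have hB : 0 < B := by
    have : 0 < μ.real (ball (0 : E) 1) :=
      ENNReal.toReal_pos (measure_ball_pos μ 0 one_pos).ne' measure_ball_lt_top.ne
    have : 0 < d := Module.finrank_pos
    positivity
  refine ⟨4 ^ (d - 1) * (M + B), by positivity, fun x ρ r hρ hr => ?_⟩
  set R := jap (ρ + ‖x‖)
  have hR : 1 ≤ R := one_le_jap _
  rw [show 4 ^ (d - 1) * (M + B) * (r / R) ^ (d - 1) = (M + B) * (4 * (r / R)) ^ (d - 1) by ring]
  have hscale : 0 ≤ (4 * (r / R)) ^ (d - 1) := by positivity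
  by_cases hRr : R ≤ 4 * r
  · have h1 : 1 ≤ (4 * (r / R)) ^ (d - 1) :=
      one_le_pow₀ (by rw [← mul_div_assoc, one_le_div (by linarith)]; exact hRr)
    calc μ.toSphere.real (sphereCap x ρ r) ≤ M := measureReal_mono (subset_univ _)
      _ ≤ (M + B) * (4 * (r / R)) ^ (d - 1) := by nlinarith
  rcases (sphereCap x ρ r).eq_empty_or_nonempty with hempty | ⟨θ, hθ⟩
  · rw [hempty, measureReal_empty]; positivity
  have hRle : R ≤ 1 + (ρ + ‖x‖) := jap_le_one_add (by positivity)
  have hx := norm_le_add_of_mem_sphereCap hρ hθ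
  have hrρ : r < ρ := by linarith
  calc μ.toSphere.real (sphereCap x ρ r) ≤ B * (r / ρ) ^ (d - 1) :=
        toSphere_real_sphereCap_le μ x (by linarith) hrρ
    _ ≤ B * (4 * (r / R)) ^ (d - 1) := by
        gcongr
        rw [← mul_div_assoc, div_le_div_iff₀ (by linarith) (by linarith)]
        nlinarith
    _ ≤ (M + B) * (4 * (r / R)) ^ (d - 1) := by nlinarith

end SphereCap

section SphericalIntegral

variable {E : Type*} [NormedAddCommGroup E] [NormedSpace ℝ E] [FiniteDimensional ℝ E]
  [MeasurableSpace E] [BorelSpace E] (μ : Measure E) [μ.IsAddHaarMeasure]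

lemma integral_jap_rpow_neg_le_add_sum {ν : ℝ} (hν : 0 ≤ ν) (x : E) (ρ : ℝ) {R : ℝ}
    (hR : 0 < R) {K : ℕ} (hRK : R ≤ 2 ^ K) :
    ∫ θ, jap (x - ρ • (θ : E)) ^ (-ν) ∂μ.toSphere ≤
      (R / 2) ^ (-ν) * μ.toSphere.real univ + ∑ k ∈ Finset.range K,
        ((2 : ℝ) ^ k / 2) ^ (-ν) * μ.toSphere.real (sphereCap x ρ (2 ^ k)) := by
  set caps : sphere (0 : E) 1 → ℝ := fun θ => ∑ k ∈ Finset.range K,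
    (sphereCap x ρ (2 ^ k)).indicator (fun _ => ((2 : ℝ) ^ k / 2) ^ (-ν)) θ
  have hcaps : Integrable caps μ.toSphere := integrable_finsetSum _ fun k _ =>
    (integrable_const _).indicator (measurableSet_sphereCap x ρ _)
  calc ∫ θ, jap (x - ρ • (θ : E)) ^ (-ν) ∂μ.toSphere
      ≤ ∫ θ, ((R / 2) ^ (-ν) + caps θ) ∂μ.toSphere := by
        refine integral_mono_of_nonneg (ae_of_all _ fun θ => ?_)
          ((integrable_const _).add hcaps) (ae_of_all _ fun θ => ?_)
        · exact Real.rpow_nonneg (jap_pos _).le _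
        · simpa only [caps, indicator_apply, sphereCap, mem_ofPred_eq] using
            rpow_neg_le_add_sum_dyadic hν (one_le_jap _) (norm_le_jap _) hR hRK
    _ = _ := by
        rw [integral_add (integrable_const _) hcaps, integral_const, integral_finsetSum _
          fun k _ => (integrable_const _).indicator (measurableSet_sphereCap x ρ _)]
        simp only [integral_indicator_const _ (measurableSet_sphereCap x ρ _), smul_eq_mul,
          mul_comm]

lemma exists_integral_jap_rpow_neg_le_geom_sum [Nontrivial E] {ν : ℝ} (hν : 0 ≤ ν) :
    ∃ C, 0 < C ∧ ∀ (x : E) (ρ : ℝ), 0 ≤ ρ → ∃ K : ℕ, (2 : ℝ) ^ K ≤ 2 * jap (ρ + ‖x‖) ∧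
      ∫ θ, jap (x - ρ • (θ : E)) ^ (-ν) ∂μ.toSphere ≤
        C * jap (ρ + ‖x‖) ^ (-ν) * (1 + ∑ k ∈ Finset.range K,
          ((2 : ℝ) ^ k / jap (ρ + ‖x‖)) ^ (((Module.finrank ℝ E - 1 : ℕ) : ℝ) - ν)) := by
  obtain ⟨C₁, hC₁, hcap⟩ := exists_toSphere_real_sphereCap_le μ
  set M := μ.toSphere.real univ
  have hM : 0 ≤ M := measureReal_nonneg
  refine ⟨2 ^ ν * (M + C₁), by positivity, fun x ρ hρ => ?_⟩
  set R := jap (ρ + ‖x‖)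
  have hR : 1 ≤ R := one_le_jap _
  obtain ⟨K, hRK, hKR⟩ := exists_two_pow_between R
  rw [max_eq_left (by linarith)] at hKR
  refine ⟨K, hKR, ?_⟩
  set S := ∑ k ∈ Finset.range K, ((2 : ℝ) ^ k / R) ^ (((Module.finrank ℝ E - 1 : ℕ) : ℝ) - ν)
  have hS : 0 ≤ S := Finset.sum_nonneg fun k _ => by positivity
  have hRν : 0 ≤ R ^ (-ν) := by positivity
  have hterm : ∀ k : ℕ,
      ((2 : ℝ) ^ k / 2) ^ (-ν) * (C₁ * ((2 : ℝ) ^ k / R) ^ (Module.finrank ℝ E - 1)) =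
        2 ^ ν * R ^ (-ν) * (C₁ * ((2 : ℝ) ^ k / R) ^ (((Module.finrank ℝ E - 1 : ℕ) : ℝ) - ν)) :=
    fun k => by rw [mul_left_comm, div_two_rpow_neg_mul_pow (by positivity) (by linarith)]; ring
  calc ∫ θ, jap (x - ρ • (θ : E)) ^ (-ν) ∂μ.toSphere
      ≤ (R / 2) ^ (-ν) * M + ∑ k ∈ Finset.range K,
          ((2 : ℝ) ^ k / 2) ^ (-ν) * μ.toSphere.real (sphereCap x ρ (2 ^ k)) :=
        integral_jap_rpow_neg_le_add_sum μ hν x ρ (by linarith) hRK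
    _ ≤ (R / 2) ^ (-ν) * M + ∑ k ∈ Finset.range K,
          ((2 : ℝ) ^ k / 2) ^ (-ν) * (C₁ * ((2 : ℝ) ^ k / R) ^ (Module.finrank ℝ E - 1)) := by
        gcongr with k
        exact hcap x ρ _ hρ (one_le_pow₀ one_le_two)
    _ = 2 ^ ν * R ^ (-ν) * (M + C₁ * S) := by
        rw [Finset.sum_congr rfl fun k _ => hterm k, ← Finset.mul_sum, ← Finset.mul_sum,
          div_two_rpow_neg (by linarith)]
        ring
    _ ≤ 2 ^ ν * (M + C₁) * R ^ (-ν) * (1 + S) := by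
        rw [mul_assoc, mul_assoc, mul_assoc]
        gcongr 2 ^ ν * ?_
        nlinarith [mul_nonneg hRν (mul_nonneg hM hS), mul_nonneg hRν hC₁.le]

lemma exists_integral_jap_rpow_neg_le_of_lt {ν : ℝ} (hν : 0 < ν)
    (hνd : ν < Module.finrank ℝ E - 1) :
    ∃ C, 0 < C ∧ ∀ (x : E) (ρ : ℝ), 0 ≤ ρ →
      ∫ θ, jap (x - ρ • (θ : E)) ^ (-ν) ∂μ.toSphere ≤ C * jap (ρ + ‖x‖) ^ (-ν) := by
  have hd : 1 ≤ Module.finrank ℝ E := by exact_mod_cast (by linarith : (1 : ℝ) ≤ Module.finrank ℝ E)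
  have := Module.nontrivial_of_finrank_pos (R := ℝ) (M := E) hd
  obtain ⟨C, hC, hJ⟩ := exists_integral_jap_rpow_neg_le_geom_sum μ hν.le
  set e := ((Module.finrank ℝ E - 1 : ℕ) : ℝ) - ν
  have he : 0 < e := by simp only [e, Nat.cast_sub hd, Nat.cast_one]; linarith
  have hq : 0 < (2 : ℝ) ^ e / (2 ^ e - 1) :=
    div_pos (by positivity) (by linarith [Real.one_lt_rpow one_lt_two he])
  refine ⟨C * (1 + 2 ^ e / (2 ^ e - 1)), by positivity, fun x ρ hρ => ?_⟩
  obtain ⟨K, hK, hJK⟩ := hJ x ρ hρ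
  have : 0 ≤ C * jap (ρ + ‖x‖) ^ (-ν) := mul_nonneg hC.le (Real.rpow_nonneg (jap_pos _).le _)
  calc _ ≤ _ := hJK
    _ ≤ C * jap (ρ + ‖x‖) ^ (-ν) * (1 + 2 ^ e / (2 ^ e - 1)) := by
        gcongr
        exact sum_range_two_pow_div_rpow_le he (jap_pos _) hK
    _ = _ := by ring

lemma exists_integral_jap_rpow_neg_le_of_eq {ν : ℝ} (hν : 0 < ν)
    (hνd : ν = Module.finrank ℝ E - 1) :
    ∃ C, 0 < C ∧ ∀ (x : E) (ρ : ℝ), 0 ≤ ρ →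
      ∫ θ, jap (x - ρ • (θ : E)) ^ (-ν) ∂μ.toSphere ≤
        C * (jap (ρ + ‖x‖) ^ (-ν) * Real.log (2 * jap ρ + ‖x‖)) := by
  have hd : 1 ≤ Module.finrank ℝ E := by exact_mod_cast (by linarith : (1 : ℝ) ≤ Module.finrank ℝ E)
  have := Module.nontrivial_of_finrank_pos (R := ℝ) (M := E) hd
  obtain ⟨C, hC, hJ⟩ := exists_integral_jap_rpow_neg_le_geom_sum μ hν.le
  have he : ((Module.finrank ℝ E - 1 : ℕ) : ℝ) - ν = 0 := by
    rw [Nat.cast_sub hd, Nat.cast_one, hνd, sub_self]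
  refine ⟨3 * C / Real.log 2, by positivity, fun x ρ hρ => ?_⟩
  obtain ⟨K, hK, hJK⟩ := hJ x ρ hρ
  simp only [he, Real.rpow_zero, Finset.sum_const, Finset.card_range, nsmul_eq_mul, mul_one]
    at hJK
  have hρ1 := one_le_jap ρ
  have hRB : jap (ρ + ‖x‖) ≤ 2 * jap ρ + ‖x‖ := by
    linarith [jap_le_one_add (by positivity : 0 ≤ ρ + ‖x‖),
      (Real.le_norm_self ρ).trans (norm_le_jap ρ)]
  have hKlog := natCast_add_one_le_log_div_log_two (by linarith [norm_nonneg x]) hRB hK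
  have : 0 ≤ C * jap (ρ + ‖x‖) ^ (-ν) := mul_nonneg hC.le (Real.rpow_nonneg (jap_pos _).le _)
  calc _ ≤ _ := hJK
    _ ≤ C * jap (ρ + ‖x‖) ^ (-ν) * (3 * Real.log (2 * jap ρ + ‖x‖) / Real.log 2) := by
        gcongr
        linarith
    _ = _ := by ring

end SphericalIntegral

theorem Jnu_upper_bound_general (n : ℕ) (ν : ℝ) (hν : 0 < ν) :
    ∃ C : ℝ, 0 < C ∧
      (ν < n - 1 → ∀ (x : Euc n) (ρ : ℝ), 0 ≤ ρ →
        Jnu n ν x ρ ≤ C * jap (ρ + ‖x‖) ^ (-ν)) ∧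
      (ν = n - 1 → ∀ (x : Euc n) (ρ : ℝ), 0 ≤ ρ →
        Jnu n ν x ρ ≤ C * (jap (ρ + ‖x‖) ^ (-ν) * Real.log (2 * jap ρ + ‖x‖))) := by
  have hdim : (Module.finrank ℝ (Euc n) : ℝ) = n := by simp
  rcases lt_trichotomy ν (n - 1) with hlt | heq | hgt
  · obtain ⟨C, hC, hJ⟩ := exists_integral_jap_rpow_neg_le_of_lt volume hν (by rwa [hdim])
    exact ⟨C, hC, fun _ => hJ, fun h => absurd h hlt.ne⟩
  · obtain ⟨C, hC, hJ⟩ := exists_integral_jap_rpow_neg_le_of_eq volume hν (by rwa [hdim])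
    exact ⟨C, hC, fun h => absurd heq h.ne, fun _ => hJ⟩
  · exact ⟨1, one_pos, fun h => absurd h hgt.not_gt, fun h => absurd h hgt.ne'⟩

/-- **Global upper bounds for the spherical integral of the Japanese-bracket kernel**
(Lemma `lem:singint2`, consequence): `J_ν ≲ ⟨ρ + |x|⟩^{-ν}` when `ν < n-1` and
`J_ν ≲ ⟨ρ + |x|⟩^{-ν} log(2⟨ρ⟩ + |x|)` when `ν = n-1`. -/
theorem Jnu_upper_bound (n : ℕ) (hn : 2 ≤ n) (ν : ℝ) (hν : 0 < ν) :
    ∃ C : ℝ, 0 < C ∧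
      (ν < n - 1 → ∀ (x : Euc n) (ρ : ℝ), 0 ≤ ρ →
        Jnu n ν x ρ ≤ C * jap (ρ + ‖x‖) ^ (-ν)) ∧
      (ν = n - 1 → ∀ (x : Euc n) (ρ : ℝ), 0 ≤ ρ →
        Jnu n ν x ρ ≤ C * (jap (ρ + ‖x‖) ^ (-ν) * Real.log (2 * jap ρ + ‖x‖))) :=
  Jnu_upper_bound_general n ν hν
end
end

section
/- Let n ≥ 2 and let q̃, r̃, p̃ ∈ [1,∞] satisfy 1 + 1/q̃ = 1/r̃ + 1/p̃. Let F : ℝ^n → ℂ be measurable with |F(x)| ≤ C₀ f(|x|) for some nonnegative measurable function f on [0,∞) and constant C₀. Then there is a constant C (depending only on n, C₀ and the exponents) such that for every measurable φ : ℝ^n → ℂ, every r > 0, and any fixed unit vector e ∈ S^{n−1}: ‖(F * φ)(r·)‖_{L^{q̃}(S^{n−1})} ≤ C ∫₀^∞ ‖ f(| r e − ρ θ |) ‖_{L^{r̃}_θ(S^{n−1})} ‖φ(ρ·)‖_{L^{p̃}(S^{n−1})} ρ^{n−1} dρ, where (F*φ)(x) = ∫_{ℝ^n} F(x−y)φ(y)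 dy and the inner norm is taken in the variable θ ∈ S^{n−1}. -/
set_option autoImplicit false

open MeasureTheory Metric Set
open scoped ENNReal NNReal

noncomputable section

/-!
Bounding `F` by `C₀ f(|·|)` and passing to polar coordinates `y = ρω` gives
`|(F * φ)(rθ)| ≤ |C₀| ∫₀^∞ ρ^{n-1} ∫_{S^{n-1}} f(|rθ - ρω|) |φ(ρω)| dω dρ`.
Minkowski's integral inequality moves the `L^q̃_θ` norm inside the `ρ`-integral. For fixed `ρ`
the inner operator on the sphere is then bounded by Young's inequality for integral operators:
its kernel `f(|rθ - ρω|)` has the same `L^r̃` norm `‖f(|re - ρ·|)‖_{L^r̃}` in `ω` for every `θ`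
and in `θ` for every `ω`, because reflections preserve the surface measure and
`|rθ - ρω| = |rω - ρθ|` for unit vectors `θ, ω`. The constant is `C = |C₀|`.
-/

open Function

theorem ENNReal.rpow_one_div_le_of_le_mul_rpow {B R : ℝ≥0∞} {q : ℝ} (hq : 0 < q) (hB : B ≠ ∞)
    (h : B ≤ R * B ^ (1 - 1 / q)) : B ^ (1 / q) ≤ R := by
  rcases eq_or_ne B 0 with rfl | hB0
  · simp [ENNReal.zero_rpow_of_pos (inv_pos.mpr hq)]
  have hsplit : B = B ^ (1 / q) * B ^ (1 - 1 / q) := by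
    rw [← ENNReal.rpow_add _ _ hB0 hB, add_sub_cancel, ENNReal.rpow_one]
  nth_rw 1 [hsplit] at h
  refine (ENNReal.mul_le_mul_iff_left ?_ ?_).mp h <;> simp [hB0, hB]

section Minkowski

variable {α β : Type*} [MeasurableSpace α] [MeasurableSpace β] {μ : Measure α} {ν : Measure β}
  {H : β → α → ℝ≥0∞}

theorem lintegral_rpow_le_mul_of_le_lintegral [SFinite μ] [SFinite ν]
    (hH : Measurable (uncurry H)) {g : α → ℝ≥0∞} (hg : Measurable g)
    (hgH : ∀ a, g a ≤ ∫⁻ b, H b a ∂ν) {q : ℝ} (hq : 1 < q) :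
    ∫⁻ a, g a ^ q ∂μ ≤
      (∫⁻ b, (∫⁻ a, H b a ^ q ∂μ) ^ (1 / q) ∂ν) * (∫⁻ a, g a ^ q ∂μ) ^ (1 - 1 / q) := by
  obtain ⟨q', hconj⟩ : ∃ q', q.HolderConjugate q' := ⟨_, .conjExponent hq⟩
  have hpow (x : ℝ≥0∞) : (x ^ (q - 1)) ^ q' = x ^ q := by
    rw [← ENNReal.rpow_mul, hconj.sub_one_mul_conj]
  have hsplit (x : ℝ≥0∞) : x ^ q = x * x ^ (q - 1) := by
    conv_lhs => rw [← add_sub_cancel 1 q]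
    rw [ENNReal.rpow_add_of_nonneg _ _ zero_le_one (by linarith), ENNReal.rpow_one]
  have hHb (b : β) : Measurable (H b) := hH.comp measurable_prodMk_left
  calc ∫⁻ a, g a ^ q ∂μ
      ≤ ∫⁻ a, ∫⁻ b, H b a * g a ^ (q - 1) ∂ν ∂μ := by
        refine lintegral_mono fun a => ?_
        have hHa : Measurable fun b => H b a := hH.comp measurable_prodMk_right
        rw [hsplit, lintegral_mul_const'' _ hHa.aemeasurable]
        exact mul_le_mul_left (hgH a) _
    _ = ∫⁻ b, ∫⁻ a, H b a * g a ^ (q - 1) ∂μ ∂ν :=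
        lintegral_lintegral_swap ((hH.comp measurable_swap).mul
          ((hg.comp measurable_fst).pow_const _)).aemeasurable
    _ ≤ ∫⁻ b, (∫⁻ a, H b a ^ q ∂μ) ^ (1 / q) * (∫⁻ a, g a ^ q ∂μ) ^ (1 / q') ∂ν := by
        refine lintegral_mono fun b => ?_
        refine (ENNReal.lintegral_mul_le_Lp_mul_Lq μ hconj (hHb b).aemeasurable
          (hg.pow_const (q - 1)).aemeasurable).trans_eq ?_
        simp only [hpow]
    _ = _ := by
        have hR : Measurable fun b => (∫⁻ a, H b a ^ q ∂μ) ^ (1 / q) :=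
          (hH.pow_const q).lintegral_prod_right'.pow_const _
        rw [lintegral_mul_const _ hR, one_div, one_div, ← hconj.one_sub_inv]

theorem ENNReal.iSup_min_natCast_rpow (x : ℝ≥0∞) {q : ℝ} (hq : 0 < q) :
    ⨆ m : ℕ, min x m ^ q = x ^ q := by
  have hsup : ⨆ m : ℕ, min x m = x := by
    rw [← inf_iSup_eq, ENNReal.iSup_natCast, inf_top_eq]
  conv_rhs => rw [← hsup]
  exact ((ENNReal.monotone_rpow_of_nonneg hq.le).map_iSup_of_continuousAt
    (ENNReal.continuous_rpow_const.continuousAt) (ENNReal.zero_rpow_of_pos hq)).symm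

/-- **Minkowski's integral inequality**. -/
theorem lintegral_rpow_lintegral_le [IsFiniteMeasure μ] [SFinite ν]
    (hH : Measurable (uncurry H)) {q : ℝ} (hq : 1 ≤ q) :
    (∫⁻ a, (∫⁻ b, H b a ∂ν) ^ q ∂μ) ^ (1 / q) ≤ ∫⁻ b, (∫⁻ a, H b a ^ q ∂μ) ^ (1 / q) ∂ν := by
  rcases hq.eq_or_lt with rfl | hq
  · have hswap : Measurable (uncurry fun a b => H b a) := hH.comp measurable_swap
    simpa using (lintegral_lintegral_swap hswap.aemeasurable).le
  have hq0 : 0 < q := zero_lt_one.trans hq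
  have hI : Measurable fun a => ∫⁻ b, H b a ∂ν := hH.lintegral_prod_left
  have htrunc (m : ℕ) : Measurable fun a => min (∫⁻ b, H b a ∂ν) m := hI.min measurable_const
  rw [one_div, ENNReal.rpow_inv_le_iff hq0]
  -- Truncated at height `m`, the inner integral has finite `L^q` norm, so the Hölder estimate
  -- `lintegral_rpow_le_mul_of_le_lintegral` can be divided by its `(1 - 1 / q)`-th power.
  calc ∫⁻ a, (∫⁻ b, H b a ∂ν) ^ q ∂μ
      = ⨆ m : ℕ, ∫⁻ a, min (∫⁻ b, H b a ∂ν) m ^ q ∂μ := by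
        rw [← lintegral_iSup (fun m => (htrunc m).pow_const q) fun i j hij a => ?_]
        · simp only [ENNReal.iSup_min_natCast_rpow _ hq0]
        · dsimp only
          gcongr
    _ ≤ _ := by
        refine iSup_le fun m => ?_
        have hfin : ∫⁻ a, min (∫⁻ b, H b a ∂ν) m ^ q ∂μ ≠ ∞ := by
          refine ne_top_of_le_ne_top ?_
            (lintegral_mono fun a => ENNReal.rpow_le_rpow (min_le_right _ (m : ℝ≥0∞)) hq0.le)
          rw [lintegral_const]
          finiteness
        rw [← ENNReal.rpow_inv_le_iff hq0, ← one_div]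
        exact ENNReal.rpow_one_div_le_of_le_mul_rpow hq0 hfin
          (lintegral_rpow_le_mul_of_le_lintegral hH (htrunc m) (fun a => min_le_left _ _) hq)

theorem Measurable.essSup_prod_right [SFinite μ] (hH : Measurable (uncurry H)) :
    Measurable fun b => essSup (H b) μ := by
  refine measurable_of_Iic fun c => ?_
  have hS : MeasurableSet {z : β × α | ¬uncurry H z ≤ c} :=
    (measurableSet_le hH measurable_const).compl
  have hpre : (fun b => essSup (H b) μ) ⁻¹' Iic c
      = (fun b => μ (Prod.mk b ⁻¹' {z | ¬uncurry H z ≤ c})) ⁻¹' {0} := by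
    ext b
    change essSup (H b) μ ≤ c ↔ μ {a | ¬H b a ≤ c} = 0
    rw [← ae_iff]
    exact ⟨fun h => (ENNReal.ae_le_essSup _).mono fun a ha => ha.trans h, essSup_le_of_ae_le c⟩
  rw [hpre]
  exact measurable_measure_prodMk_left hS (measurableSet_singleton 0)

theorem eLpNorm_top_lintegral_le [SFinite μ] [SFinite ν] (hH : Measurable (uncurry H)) :
    eLpNorm (fun a => ∫⁻ b, H b a ∂ν) ∞ μ ≤ ∫⁻ b, eLpNorm (H b) ∞ μ ∂ν := by
  simp only [eLpNorm_exponent_top, eLpNormEssSup, enorm_eq_self]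
  have hG := hH.essSup_prod_right (μ := μ)
  have h : ∀ᵐ a ∂μ, ∀ᵐ b ∂ν, H b a ≤ essSup (H b) μ :=
    (Measure.ae_ae_comm (p := fun a b => H b a ≤ essSup (H b) μ)
      (measurableSet_le (hH.comp measurable_swap) (hG.comp measurable_snd))).mpr
      (ae_of_all _ fun b => ENNReal.ae_le_essSup _)
  exact essSup_le_of_ae_le _ (h.mono fun a ha => lintegral_mono_ae ha)

theorem eLpNorm_lintegral_le [IsFiniteMeasure μ] [SFinite ν] (hH : Measurable (uncurry H))
    {q : ℝ≥0∞} (hq : 1 ≤ q) :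
    eLpNorm (fun a => ∫⁻ b, H b a ∂ν) q μ ≤ ∫⁻ b, eLpNorm (H b) q μ ∂ν := by
  rcases eq_or_ne q ∞ with rfl | hq_top
  · exact eLpNorm_top_lintegral_le hH
  have hq0 : q ≠ 0 := (zero_lt_one.trans_le hq).ne'
  simp only [eLpNorm_eq_lintegral_rpow_enorm_toReal hq0 hq_top, enorm_eq_self]
  exact lintegral_rpow_lintegral_le hH (by simpa using ENNReal.toReal_mono hq_top hq)

end Minkowski

section Young

variable {α β : Type*} [MeasurableSpace α] [MeasurableSpace β] {μ : Measure α} {ν : Measure β}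

theorem lintegral_mul_le_eLpNorm_top_mul {f g : α → ℝ≥0∞} (hg : Measurable g) :
    ∫⁻ a, f a * g a ∂μ ≤ eLpNorm f ∞ μ * eLpNorm g 1 μ := by
  simp only [eLpNorm_exponent_top, eLpNormEssSup, eLpNorm_one_eq_lintegral_enorm, enorm_eq_self]
  rw [← lintegral_const_mul _ hg]
  exact lintegral_mono_ae ((ENNReal.ae_le_essSup f).mono fun a ha => by gcongr)

theorem lintegral_mul_le_eLpNorm_mul_eLpNorm {f g : α → ℝ≥0∞} (hf : Measurable f)
    (hg : Measurable g) {p q : ℝ≥0∞} (hpq : p.HolderConjugate q) :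
    ∫⁻ a, f a * g a ∂μ ≤ eLpNorm f p μ * eLpNorm g q μ := by
  rcases eq_or_ne p ∞ with rfl | hp
  · obtain rfl : q = 1 := by simpa using hpq.conj_eq
    exact lintegral_mul_le_eLpNorm_top_mul hg
  rcases eq_or_ne q ∞ with rfl | hq
  · obtain rfl : p = 1 := by simpa using hpq.symm.conj_eq
    simp_rw [mul_comm (f _), mul_comm (eLpNorm f 1 μ)]
    exact lintegral_mul_le_eLpNorm_top_mul hf
  have hpq' := hpq.toReal_of_ne_top hp hq
  simp only [eLpNorm_eq_lintegral_rpow_enorm_toReal hpq.ne_zero hp,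
    eLpNorm_eq_lintegral_rpow_enorm_toReal hpq.symm.ne_zero hq, enorm_eq_self]
  exact ENNReal.lintegral_mul_le_Lp_mul_Lq μ hpq' hf.aemeasurable hg.aemeasurable

theorem lintegral_mul_le_of_young_exponents {f g : α → ℝ≥0∞} (hf : Measurable f)
    (hg : Measurable g) {q r p : ℝ} (hq : 1 ≤ q) (hr : 1 ≤ r) (hp : 1 ≤ p)
    (hqrp : 1 + 1 / q = 1 / r + 1 / p) :
    ∫⁻ a, f a * g a ∂μ ≤ (∫⁻ a, f a ^ r * g a ^ p ∂μ) ^ (1 / q) *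
      (∫⁻ a, f a ^ r ∂μ) ^ (1 - 1 / p) * (∫⁻ a, g a ^ p ∂μ) ^ (1 - 1 / r) := by
  simp only [one_div] at hqrp ⊢
  have hq' : 0 ≤ q⁻¹ := inv_nonneg.2 (zero_le_one.trans hq)
  have hr' : r⁻¹ ≤ 1 := inv_le_one_of_one_le₀ hr
  have hp' : p⁻¹ ≤ 1 := inv_le_one_of_one_le₀ hp
  set F : Fin 3 → α → ℝ≥0∞ := ![fun a => f a ^ r * g a ^ p, fun a => f a ^ r, fun a => g a ^ p]
  set w : Fin 3 → ℝ := ![q⁻¹, 1 - p⁻¹, 1 - r⁻¹]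
  have hfg (a : α) : f a * g a = ∏ i, F i a ^ w i := by
    have hf1 : r * q⁻¹ + r * (1 - p⁻¹) = 1 := by
      rw [← mul_add, show q⁻¹ + (1 - p⁻¹) = r⁻¹ by linarith,
        mul_inv_cancel₀ (zero_lt_one.trans_le hr).ne']
    have hg1 : p * q⁻¹ + p * (1 - r⁻¹) = 1 := by
      rw [← mul_add, show q⁻¹ + (1 - r⁻¹) = p⁻¹ by linarith,
        mul_inv_cancel₀ (zero_lt_one.trans_le hp).ne']
    simp only [Fin.prod_univ_three, F, w, Matrix.cons_val_zero, Matrix.cons_val_one,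
      Matrix.cons_val_two, Matrix.head_cons, Matrix.tail_cons]
    rw [ENNReal.mul_rpow_of_nonneg _ _ hq', ← ENNReal.rpow_mul, ← ENNReal.rpow_mul,
      ← ENNReal.rpow_mul, ← ENNReal.rpow_mul, mul_right_comm (f a ^ _), mul_assoc,
      ← ENNReal.rpow_add_of_nonneg _ _ (by positivity) (by nlinarith),
      ← ENNReal.rpow_add_of_nonneg _ _ (by positivity) (by nlinarith), hf1, hg1,
      ENNReal.rpow_one, ENNReal.rpow_one]
  have hF : ∀ i ∈ Finset.univ, AEMeasurable (F i) μ := by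
    intro i _
    fin_cases i
    exacts [((hf.pow_const r).mul (hg.pow_const p)).aemeasurable,
      (hf.pow_const r).aemeasurable, (hg.pow_const p).aemeasurable]
  have hw : ∑ i, w i = 1 := by simp only [Fin.sum_univ_three, w]; simp; linarith
  have hw0 : ∀ i ∈ Finset.univ, 0 ≤ w i := by
    intro i _
    fin_cases i <;> simp [w] <;> linarith
  simp_rw [hfg]
  refine (ENNReal.lintegral_prod_norm_pow_le Finset.univ hF hw hw0).trans_eq ?_
  simp [Fin.prod_univ_three, F, w]

/-- **Young's inequality** for integral operators. -/
theorem lintegral_rpow_lintegral_mul_le [SFinite μ] [SFinite ν] {k : α → β → ℝ≥0∞}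
    {Φ : β → ℝ≥0∞} (hk : Measurable (uncurry k)) (hΦ : Measurable Φ) {q r p : ℝ} (hq : 1 ≤ q)
    (hr : 1 ≤ r) (hp : 1 ≤ p) (hqrp : 1 + 1 / q = 1 / r + 1 / p) {A : ℝ≥0∞}
    (hA : ∀ a, ∫⁻ b, k a b ^ r ∂ν ≤ A) (hA' : ∀ b, ∫⁻ a, k a b ^ r ∂μ ≤ A) :
    (∫⁻ a, (∫⁻ b, k a b * Φ b ∂ν) ^ q ∂μ) ^ (1 / q) ≤
      A ^ (1 / r) * (∫⁻ b, Φ b ^ p ∂ν) ^ (1 / p) := by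
  have hq0 : 0 < q := zero_lt_one.trans_le hq
  have hr' : 1 / r ≤ 1 := (div_le_one (zero_lt_one.trans_le hr)).2 hr
  have hp' : 1 / p ≤ 1 := (div_le_one (zero_lt_one.trans_le hp)).2 hp
  set B := ∫⁻ b, Φ b ^ p ∂ν
  set c := A ^ (1 - 1 / p) * B ^ (1 - 1 / r)
  set J : α → ℝ≥0∞ := fun a => ∫⁻ b, k a b ^ r * Φ b ^ p ∂ν
  have hkΦ : Measurable (uncurry fun a b => k a b ^ r * Φ b ^ p) :=
    (hk.pow_const r).mul ((hΦ.comp measurable_snd).pow_const p)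
  have hpt (a : α) : (∫⁻ b, k a b * Φ b ∂ν) ^ q ≤ J a * c ^ q := by
    have hka : Measurable (k a) := hk.comp measurable_prodMk_left
    have h := lintegral_mul_le_of_young_exponents (μ := ν) hka hΦ hq hr hp hqrp
    calc (∫⁻ b, k a b * Φ b ∂ν) ^ q ≤ (J a ^ (1 / q) * c) ^ q := by
          rw [← mul_assoc]
          gcongr
          exact h.trans (by gcongr; exact hA a)
      _ = J a * c ^ q := by
          rw [ENNReal.mul_rpow_of_nonneg _ _ hq0.le, ← ENNReal.rpow_mul, one_div_mul_cancel hq0.ne',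
            ENNReal.rpow_one]
  have hJ : ∫⁻ a, J a ∂μ ≤ A * B := by
    calc ∫⁻ a, J a ∂μ = ∫⁻ b, (∫⁻ a, k a b ^ r ∂μ) * Φ b ^ p ∂ν := by
          rw [lintegral_lintegral_swap hkΦ.aemeasurable]
          refine lintegral_congr fun b => lintegral_mul_const _ ?_
          exact (hk.comp measurable_prodMk_right).pow_const r
      _ ≤ ∫⁻ b, A * Φ b ^ p ∂ν := lintegral_mono fun b => by gcongr; exact hA' b
      _ = A * B := lintegral_const_mul _ (hΦ.pow_const p)
  calc (∫⁻ a, (∫⁻ b, k a b * Φ b ∂ν) ^ q ∂μ) ^ (1 / q)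
      ≤ (∫⁻ a, J a * c ^ q ∂μ) ^ (1 / q) := by gcongr with a; exact hpt a
    _ = (∫⁻ a, J a ∂μ) ^ (1 / q) * c := by
        have hJm : Measurable J := hkΦ.lintegral_prod_right'
        rw [lintegral_mul_const _ hJm, ENNReal.mul_rpow_of_nonneg _ _ (by positivity),
          ← ENNReal.rpow_mul, mul_one_div_cancel hq0.ne', ENNReal.rpow_one]
    _ ≤ (A * B) ^ (1 / q) * c := by gcongr
    _ = A ^ (1 / r) * B ^ (1 / p) := by
        rw [ENNReal.mul_rpow_of_nonneg _ _ (by positivity), mul_mul_mul_comm,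
          ← ENNReal.rpow_add_of_nonneg _ _ (by positivity) (by linarith),
          ← ENNReal.rpow_add_of_nonneg _ _ (by positivity) (by linarith)]
        congr 2 <;> linarith

theorem ENNReal.ne_top_of_young_exponents {q r p : ℝ≥0∞} (hq : q ≠ ∞) (hp : 1 ≤ p)
    (hqrp : 1 + 1 / q = 1 / r + 1 / p) : r ≠ ∞ := by
  rintro rfl
  have h : 1 + q⁻¹ ≤ 1 + 0 := calc
    1 + q⁻¹ = p⁻¹ := by simpa [one_div] using hqrp
    _ ≤ 1 + 0 := by simpa using ENNReal.inv_le_one.2 hp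
  exact hq (ENNReal.inv_eq_zero.1 (nonpos_iff_eq_zero.1 (ENNReal.le_of_add_le_add_left
    ENNReal.one_ne_top h)))

theorem ENNReal.toReal_young_exponents {q r p : ℝ≥0∞} (hq : 1 ≤ q) (hr : 1 ≤ r) (hp : 1 ≤ p)
    (hqrp : 1 + 1 / q = 1 / r + 1 / p) :
    1 + 1 / q.toReal = 1 / r.toReal + 1 / p.toReal := by
  have h0 : ∀ s : ℝ≥0∞, 1 ≤ s → 1 / s ≠ ∞ := fun s hs => by
    simpa using (zero_lt_one.trans_le hs).ne'
  have := congrArg ENNReal.toReal hqrp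
  rwa [ENNReal.toReal_add ENNReal.one_ne_top (h0 q hq), ENNReal.toReal_add (h0 r hr) (h0 p hp),
    ENNReal.toReal_div, ENNReal.toReal_div, ENNReal.toReal_div, ENNReal.toReal_one] at this

theorem lintegral_rpow_le_of_eLpNorm_le {f : α → ℝ≥0∞} {p A : ℝ≥0∞} (hp0 : p ≠ 0) (hp : p ≠ ∞)
    (hf : eLpNorm f p μ ≤ A) : ∫⁻ a, f a ^ p.toReal ∂μ ≤ A ^ p.toReal := by
  rwa [eLpNorm_eq_lintegral_rpow_enorm_toReal hp0 hp, one_div,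
    ENNReal.rpow_inv_le_iff (ENNReal.toReal_pos hp0 hp)] at hf

theorem eLpNorm_lintegral_mul_le [SFinite μ] [SFinite ν] {k : α → β → ℝ≥0∞}
    {Φ : β → ℝ≥0∞} (hk : Measurable (uncurry k)) (hΦ : Measurable Φ) {q r p : ℝ≥0∞}
    (hq : 1 ≤ q) (hr : 1 ≤ r) (hp : 1 ≤ p) (hqrp : 1 + 1 / q = 1 / r + 1 / p) {A : ℝ≥0∞}
    (hA : ∀ a, eLpNorm (k a) r ν ≤ A) (hA' : ∀ b, eLpNorm (fun a => k a b) r μ ≤ A) :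
    eLpNorm (fun a => ∫⁻ b, k a b * Φ b ∂ν) q μ ≤ A * eLpNorm Φ p ν := by
  have hka (a : α) : Measurable (k a) := hk.comp measurable_prodMk_left
  rcases eq_or_ne q ∞ with rfl | hq_top
  · have hrp : r.HolderConjugate p := ⟨by simpa [one_div] using hqrp.symm⟩
    simp only [eLpNorm_exponent_top, eLpNormEssSup, enorm_eq_self]
    refine essSup_le_of_ae_le _ (ae_of_all _ fun a => ?_)
    calc ∫⁻ b, k a b * Φ b ∂ν ≤ eLpNorm (k a) r ν * eLpNorm Φ p ν :=
          lintegral_mul_le_eLpNorm_mul_eLpNorm (hka a) hΦ hrp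
      _ ≤ A * eLpNorm Φ p ν := by gcongr; exact hA a
  have hr_top : r ≠ ∞ := ENNReal.ne_top_of_young_exponents hq_top hp hqrp
  have hp_top : p ≠ ∞ := ENNReal.ne_top_of_young_exponents hq_top hr (by rwa [add_comm (1 / p)])
  have hne (s : ℝ≥0∞) (hs : 1 ≤ s) : s ≠ 0 := (zero_lt_one.trans_le hs).ne'
  have hr0 : 0 < r.toReal := ENNReal.toReal_pos (hne r hr) hr_top
  have hone (s : ℝ≥0∞) (hs : 1 ≤ s) (hs_top : s ≠ ∞) : 1 ≤ s.toReal := by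
    simpa using ENNReal.toReal_mono hs_top hs
  simp only [eLpNorm_eq_lintegral_rpow_enorm_toReal (hne q hq) hq_top,
    eLpNorm_eq_lintegral_rpow_enorm_toReal (hne p hp) hp_top, enorm_eq_self]
  conv_rhs => rw [← ENNReal.rpow_rpow_inv hr0.ne' A, ← one_div]
  exact lintegral_rpow_lintegral_mul_le hk hΦ (hone q hq hq_top) (hone r hr hr_top)
    (hone p hp hp_top) (ENNReal.toReal_young_exponents hq hr hp hqrp)
    (fun a => lintegral_rpow_le_of_eLpNorm_le (hne r hr) hr_top (hA a))
    (fun b => lintegral_rpow_le_of_eLpNorm_le (hne r hr) hr_top (hA' b))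

end Young

section Sphere

open scoped Pointwise

variable {E : Type*} [NormedAddCommGroup E]

def LinearIsometryEquiv.restrictSphere [NormedSpace ℝ E] (R : E ≃ₗᵢ[ℝ] E) :
    sphere (0 : E) 1 → sphere (0 : E) 1 :=
  fun θ => ⟨R θ, by simp⟩

theorem LinearIsometryEquiv.continuous_restrictSphere [NormedSpace ℝ E] (R : E ≃ₗᵢ[ℝ] E) :
    Continuous R.restrictSphere :=
  (R.continuous.comp continuous_subtype_val).subtype_mk _

theorem LinearIsometryEquiv.measurePreserving_restrictSphere [NormedSpace ℝ E] [MeasurableSpace E]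
    [BorelSpace E] {μ : Measure E} (R : E ≃ₗᵢ[ℝ] E) (hR : MeasurePreserving R μ μ) :
    MeasurePreserving R.restrictSphere μ.toSphere μ.toSphere := by
  have hm := R.continuous_restrictSphere.measurable
  refine ⟨hm, Measure.ext fun s hs => ?_⟩
  rw [Measure.map_apply hm hs, μ.toSphere_apply' (hm hs), μ.toSphere_apply' hs]
  have hcone : Ioo (0 : ℝ) 1 • ((↑) '' (R.restrictSphere ⁻¹' s) : Set E)
      = R ⁻¹' (Ioo (0 : ℝ) 1 • ((↑) '' s)) := by
    ext x
    simp only [mem_preimage, Set.mem_smul, mem_image]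
    constructor
    · rintro ⟨t, ht, _, ⟨θ, hθ, rfl⟩, rfl⟩
      exact ⟨t, ht, _, ⟨_, hθ, rfl⟩, (R.map_smul t (θ : E)).symm⟩
    · rintro ⟨t, ht, _, ⟨θ, hθ, rfl⟩, hx⟩
      have hθ' : R.restrictSphere (R.symm.restrictSphere θ) = θ :=
        Subtype.ext (R.apply_symm_apply θ)
      refine ⟨t, ht, _, ⟨R.symm.restrictSphere θ, hθ'.symm ▸ hθ, rfl⟩, R.injective ?_⟩
      simpa [restrictSphere] using hx
  rw [hcone, hR.measure_preimage_emb R.toHomeomorph.measurableEmbedding]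

theorem norm_smul_sub_smul_comm [InnerProductSpace ℝ E] {x y : E} (hxy : ‖x‖ = ‖y‖) (a b : ℝ) :
    ‖a • x - b • y‖ = ‖a • y - b • x‖ := by
  refine (sq_eq_sq₀ (norm_nonneg _) (norm_nonneg _)).1 ?_
  simp only [norm_sub_sq_real, norm_smul, real_inner_smul_left, real_inner_smul_right,
    real_inner_comm x y, hxy]

variable [InnerProductSpace ℝ E] [FiniteDimensional ℝ E] [MeasurableSpace E] [BorelSpace E]
  {F : Type*} [NormedAddCommGroup F] {g : ℝ → F}

theorem eLpNorm_toSphere_norm_smul_sub_congr (hg : StronglyMeasurable g) (p : ℝ≥0∞) (a b : ℝ)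
    {v w : E} (hvw : ‖v‖ = ‖w‖) :
    eLpNorm (fun θ : sphere (0 : E) 1 => g ‖a • v - b • (θ : E)‖) p (volume : Measure E).toSphere
      = eLpNorm (fun θ : sphere (0 : E) 1 => g ‖a • w - b • (θ : E)‖) p volume.toSphere := by
  set R := (ℝ ∙ (w - v))ᗮ.reflection
  have hR : R w = v := Submodule.reflection_sub hvw.symm
  have hmp := R.measurePreserving_restrictSphere R.measurePreserving
  have hG : StronglyMeasurable fun θ : sphere (0 : E) 1 => g ‖a • v - b • (θ : E)‖ :=
    hg.comp_measurable (by fun_prop)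
  rw [← eLpNorm_comp_measurePreserving hG.aestronglyMeasurable hmp]
  congr 1
  ext θ
  change g ‖a • v - b • R θ‖ = g ‖a • w - b • (θ : E)‖
  rw [← hR, ← R.map_smul, ← R.map_smul, ← map_sub, R.norm_map]

theorem eLpNorm_toSphere_lintegral_le (hg : StronglyMeasurable g) {G : Type*}
    [NormedAddCommGroup G] [MeasurableSpace G] [OpensMeasurableSpace G]
    {Φ : sphere (0 : E) 1 → G} (hΦ : Measurable Φ) {q r p : ℝ≥0∞} (hq : 1 ≤ q) (hr : 1 ≤ r)
    (hp : 1 ≤ p) (hqrp : 1 + 1 / q = 1 / r + 1 / p) (a b : ℝ) {e : E} (he : ‖e‖ = 1) :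
    eLpNorm (fun θ : sphere (0 : E) 1 =>
        ∫⁻ ω, ‖g ‖a • (θ : E) - b • (ω : E)‖‖ₑ * ‖Φ ω‖ₑ ∂(volume : Measure E).toSphere)
        q volume.toSphere
      ≤ eLpNorm (fun ω : sphere (0 : E) 1 => g ‖a • e - b • (ω : E)‖) r volume.toSphere *
        eLpNorm Φ p volume.toSphere := by
  have hθ (θ : sphere (0 : E) 1) : ‖(θ : E)‖ = ‖e‖ := by simp [he]
  have hk : Measurable (uncurry fun θ ω : sphere (0 : E) 1 => ‖g ‖a • (θ : E) - b • (ω : E)‖‖ₑ) :=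
    (hg.comp_measurable (by fun_prop)).enorm
  rw [← eLpNorm_enorm Φ]
  refine eLpNorm_lintegral_mul_le hk hΦ.enorm hq hr hp hqrp (fun θ => ?_) (fun ω => ?_)
  · rw [eLpNorm_enorm]
    exact (eLpNorm_toSphere_norm_smul_sub_congr hg r a b (hθ θ)).le
  · rw [eLpNorm_enorm]
    simp_rw [norm_smul_sub_smul_comm (hθ _ |>.trans (hθ ω).symm) a b]
    exact (eLpNorm_toSphere_norm_smul_sub_congr hg r a b (hθ ω)).le

end Sphere

section Polar

variable {E : Type*} [NormedAddCommGroup E] [NormedSpace ℝ E] [FiniteDimensional ℝ E]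
  [MeasurableSpace E] [BorelSpace E] [Nontrivial E] (μ : Measure E) [μ.IsAddHaarMeasure]

theorem lintegral_eq_lintegral_Ioi_lintegral_toSphere {h : E → ℝ≥0∞} (hh : Measurable h) :
    ∫⁻ x, h x ∂μ = ∫⁻ ρ in Ioi (0 : ℝ), ENNReal.ofReal (ρ ^ (Module.finrank ℝ E - 1)) *
      ∫⁻ θ, h (ρ • (θ : E)) ∂μ.toSphere := by
  have hg : Measurable fun z : sphere (0 : E) 1 × Ioi (0 : ℝ) => h ((z.2 : ℝ) • (z.1 : E)) :=
    hh.comp (by fun_prop)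
  have hpolar (x : ({0}ᶜ : Set E)) : h x = h (((homeomorphUnitSphereProd E x).2 : ℝ) •
      ((homeomorphUnitSphereProd E x).1 : E)) := by
    simp [smul_smul, mul_inv_cancel₀ (norm_ne_zero_iff.mpr x.2)]
  calc ∫⁻ x, h x ∂μ = ∫⁻ x : ({0}ᶜ : Set E), h x ∂(μ.comap (↑)) := by
        rw [lintegral_subtype_comap (measurableSet_singleton 0).compl, restrict_compl_singleton]
    _ = ∫⁻ z, h ((z.2 : ℝ) • (z.1 : E))
          ∂(μ.toSphere.prod (Measure.volumeIoiPow (Module.finrank ℝ E - 1))) := by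
        rw [lintegral_congr hpolar,
          (μ.measurePreserving_homeomorphUnitSphereProd).lintegral_comp hg]
    _ = _ := by
        have hI : Measurable fun ρ : Ioi (0 : ℝ) => ∫⁻ θ, h ((ρ : ℝ) • (θ : E)) ∂μ.toSphere :=
          (hg.comp measurable_swap).lintegral_prod_right'
        rw [lintegral_prod_symm' _ hg, Measure.volumeIoiPow]
        dsimp only
        rw [lintegral_withDensity_eq_lintegral_mul _ (by fun_prop) hI,
          ← lintegral_subtype_comap measurableSet_Ioi]
        rfl

theorem enorm_integral_mul_le_lintegral_polar {𝕜 : Type*} [NormedDivisionRing 𝕜]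
    [NormedSpace ℝ 𝕜] [MeasurableSpace 𝕜] [OpensMeasurableSpace 𝕜] {F φ : E → 𝕜}
    (hφ : Measurable φ) {f : ℝ → ℝ} (hf : Measurable f) {C₀ : ℝ}
    (hFf : ∀ x, ‖F x‖ ≤ C₀ * f ‖x‖) (x : E) :
    ‖∫ y, F (x - y) * φ y ∂μ‖ₑ ≤ ‖C₀‖ₑ * ∫⁻ ρ in Ioi (0 : ℝ),
      ENNReal.ofReal (ρ ^ (Module.finrank ℝ E - 1)) *
        ∫⁻ ω, ‖f ‖x - ρ • (ω : E)‖‖ₑ * ‖φ (ρ • (ω : E))‖ₑ ∂μ.toSphere := by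
  have hF (z : E) : ‖F z‖ₑ ≤ ‖C₀‖ₑ * ‖f ‖z‖‖ₑ := by
    rw [← enorm_mul, enorm_le_iff_norm_le]
    exact (hFf z).trans (le_abs_self _)
  have hh : Measurable fun y => ‖f ‖x - y‖‖ₑ * ‖φ y‖ₑ :=
    (hf.comp (by fun_prop)).enorm.mul hφ.enorm
  calc ‖∫ y, F (x - y) * φ y ∂μ‖ₑ ≤ ∫⁻ y, ‖F (x - y) * φ y‖ₑ ∂μ :=
        enorm_integral_le_lintegral_enorm _
    _ ≤ ∫⁻ y, ‖C₀‖ₑ * (‖f ‖x - y‖‖ₑ * ‖φ y‖ₑ) ∂μ := lintegral_mono fun y => by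
        rw [enorm_mul, ← mul_assoc]
        gcongr
        exact hF _
    _ = _ := by rw [lintegral_const_mul _ hh, lintegral_eq_lintegral_Ioi_lintegral_toSphere μ hh]

end Polar

/-- **Spherical Young inequality for convolutions with radially dominated kernels**
(estimate `eq:firstest`): for exponents `1 + 1/q̃ = 1/r̃ + 1/p̃` and a kernel `F` with
`|F(x)| ≤ C₀ f(|x|)`, the `L^{q̃}` norm on the sphere of radius `r` of `F * φ` is
controlled by `∫₀^∞ ‖f(|re − ρθ|)‖_{L^{r̃}_θ} ‖φ(ρ·)‖_{L^{p̃}_θ} ρ^{n-1} dρ`. -/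
theorem sphere_young_convolution
    (n : ℕ) (hn : 2 ≤ n) (C₀ : ℝ)
    (qt rt pt : ℝ≥0∞) (hqt : 1 ≤ qt) (hrt : 1 ≤ rt) (hpt : 1 ≤ pt)
    (hexp : 1 + 1 / qt = 1 / rt + 1 / pt) :
    ∃ C : ℝ≥0∞, C ≠ ∞ ∧
      ∀ (F : Euc n → ℂ) (f : ℝ → ℝ), Measurable F → Measurable f →
        (∀ t : ℝ, 0 ≤ f t) → (∀ x : Euc n, ‖F x‖ ≤ C₀ * f ‖x‖) →
        ∀ (φ : Euc n → ℂ), Measurable φ →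
        ∀ (r : ℝ), 0 < r → ∀ e : Euc n, ‖e‖ = 1 →
          eLpNorm
              (fun θ : sphere (0 : Euc n) 1 =>
                ∫ y : Euc n, F (r • (θ : Euc n) - y) * φ y)
              qt (sphMeasure n)
            ≤ C * ∫⁻ ρ in Ioi (0 : ℝ),
                eLpNorm
                    (fun θ : sphere (0 : Euc n) 1 => f ‖r • e - ρ • (θ : Euc n)‖)
                    rt (sphMeasure n)
                  * eLpNorm
                      (fun θ : sphere (0 : Euc n) 1 => φ (ρ • (θ : Euc n)))
                      pt (sphMeasure n)
                  * ENNReal.ofReal (ρ ^ (n - 1)) := by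
  have : Nontrivial (Euc n) :=
    Module.nontrivial_of_finrank_pos (by rw [finrank_euclideanSpace_fin]; omega)
  refine ⟨‖C₀‖ₑ, enorm_ne_top, fun F f _ hf _ hFf φ hφ r _ e he => ?_⟩
  unfold sphMeasure
  set σ : Measure (sphere (0 : Euc n) 1) := volume.toSphere
  set S : ℝ → sphere (0 : Euc n) 1 → ℝ≥0∞ := fun ρ θ =>
    ∫⁻ ω, ‖f ‖r • (θ : Euc n) - ρ • (ω : Euc n)‖‖ₑ * ‖φ (ρ • (ω : Euc n))‖ₑ ∂σ
  have hS : Measurable (uncurry S) := by simp only [S, uncurry_def]; fun_prop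
  have hH : Measurable (uncurry fun ρ θ => ENNReal.ofReal (ρ ^ (n - 1)) * S ρ θ) :=
    (measurable_fst.pow_const _).ennreal_ofReal.mul hS
  calc eLpNorm (fun θ : sphere (0 : Euc n) 1 => ∫ y, F (r • (θ : Euc n) - y) * φ y) qt σ
      ≤ ‖C₀‖ₑ * eLpNorm (fun θ => ∫⁻ ρ in Ioi 0, ENNReal.ofReal (ρ ^ (n - 1)) * S ρ θ) qt σ := by
        refine eLpNorm_le_mul_eLpNorm_of_ae_le_mul'' _
          hH.lintegral_prod_left.aestronglyMeasurable (ae_of_all _ fun θ => ?_)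
        simpa using enorm_integral_mul_le_lintegral_polar volume hφ hf hFf (r • (θ : Euc n))
    _ ≤ ‖C₀‖ₑ * ∫⁻ ρ in Ioi 0, eLpNorm (fun θ => ENNReal.ofReal (ρ ^ (n - 1)) * S ρ θ) qt σ := by
        gcongr
        exact eLpNorm_lintegral_le hH hqt
    _ ≤ ‖C₀‖ₑ * ∫⁻ ρ in Ioi 0, eLpNorm (S ρ) qt σ * ENNReal.ofReal (ρ ^ (n - 1)) := by
        gcongr with ρ
        rw [mul_comm]
        exact eLpNorm_le_mul_eLpNorm_of_ae_le_mul'' _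
          (hS.comp measurable_prodMk_left).aestronglyMeasurable (ae_of_all _ fun θ => by simp)
    _ ≤ _ := by
        gcongr with ρ
        exact eLpNorm_toSphere_lintegral_le hf.stronglyMeasurable (hφ.comp (by fun_prop)) hqt hrt
          hpt hexp r ρ he
end
end

section
/- Let n ≥ 2, 1 ≤ p, p̃ < ∞ and δ > 1 − n/p. Then for every u ∈ C_c^∞(ℝ^n): ‖ |x|^{δ} u ‖_{L^p_{|x|}L^{p̃}_θ} ≤ C ‖ |x|^{1+δ} ∇u ‖_{L^p_{|x|}L^{p̃}_θ}, where C depends only on n, p, δ and ‖|x|^{1+δ}∇u‖ denotes the mixed norm of the Euclidean norm of the gradient of u. -/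
set_option maxHeartbeats 2000000


set_option autoImplicit false

open MeasureTheory Metric Set
open scoped ENNReal NNReal

noncomputable section

/-- Angular `L^p̃` norm of `f` on the sphere of radius `ρ`:
`‖f(ρ ·)‖_{L^{p̃}(S^{n-1})}`. -/
def angNorm (n : ℕ) (pt : ℝ≥0∞) {F : Type*} [NormedAddCommGroup F]
    (f : Euc n → F) (ρ : ℝ) : ℝ≥0∞ :=
  eLpNorm (fun θ : sphere (0 : Euc n) 1 => f (ρ • (θ : Euc n))) pt (sphMeasure n)

/-- The mixed radial–angular norm `‖f‖_{L^p_{|x|} L^{p̃}_θ}`, with exponents in `[1,∞]`. -/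
def mixedNorm (n : ℕ) (p pt : ℝ≥0∞) {F : Type*} [NormedAddCommGroup F]
    (f : Euc n → F) : ℝ≥0∞ :=
  if p = ∞ then ⨆ ρ ∈ Ioi (0 : ℝ), angNorm n pt f ρ
  else (∫⁻ ρ in Ioi (0 : ℝ),
      (angNorm n pt f ρ) ^ p.toReal * ENNReal.ofReal (ρ ^ (n - 1))) ^ (1 / p.toReal)

section Minkowski

variable {α β : Type*} [MeasurableSpace α] [MeasurableSpace β]
  (μ : Measure α) (ν : Measure β) [SigmaFinite μ] [SigmaFinite ν]

/-- Minkowski's integral inequality for `ℝ≥0∞`-valued functions. -/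
theorem lintegral_lintegral_rpow_le {p : ℝ} (hp : 1 ≤ p) {f : α → β → ℝ≥0∞}
    (hf : Measurable (Function.uncurry f)) :
    (∫⁻ y, (∫⁻ x, f x y ∂μ) ^ p ∂ν) ^ (1 / p)
      ≤ ∫⁻ x, (∫⁻ y, (f x y) ^ p ∂ν) ^ (1 / p) ∂μ := by
  have hp0 : (0:ℝ) < p := lt_of_lt_of_le one_pos hp
  rcases eq_or_lt_of_le hp with hp1 | hp1
  · simp only [← hp1, ENNReal.rpow_one, one_div, inv_one]
    exact le_of_eq (lintegral_lintegral_swap hf.aemeasurable).symm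
  -- now 1 < p
  have hpq : p.HolderConjugate (p / (p - 1)) := Real.HolderConjugate.conjExponent hp1
  set q : ℝ := p / (p - 1) with hq
  have hq0 : (0:ℝ) < q := hpq.symm.pos
  have hΦm : Measurable fun y => ∫⁻ x, f x y ∂μ := hf.lintegral_prod_left
  set Φ : β → ℝ≥0∞ := fun y => ∫⁻ x, f x y ∂μ with hΦ
  set S : ℝ≥0∞ := ∫⁻ x, (∫⁻ y, (f x y) ^ p ∂ν) ^ (1 / p) ∂μ with hS
  -- truncation
  have key : ∀ k : ℕ, ∫⁻ y in spanningSets ν k, min (Φ y) k ^ p ∂ν ≤ S ^ p := by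
    intro k
    set B : Set β := spanningSets ν k with hB
    have hBmeas : MeasurableSet B := measurableSet_spanningSets ν k
    set c : β → ℝ≥0∞ := fun y => min (Φ y) k ^ (p - 1) with hc
    have hcm : Measurable c :=
      (ENNReal.continuous_rpow_const.measurable).comp (hΦm.min measurable_const)
    have hcfin : ∀ y, c y ≠ ∞ := fun y =>
      (ENNReal.rpow_lt_top_of_nonneg (by linarith)
        (ne_top_of_le_ne_top (ENNReal.natCast_ne_top k) (min_le_right _ _))).ne
    set I : ℝ≥0∞ := ∫⁻ y in B, min (Φ y) k ^ p ∂ν with hI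
    have hIfin : I ≠ ∞ := by
      have : I ≤ (k : ℝ≥0∞) ^ p * ν B := by
        rw [← setLIntegral_const]
        exact setLIntegral_mono' hBmeas fun y _ =>
          ENNReal.rpow_le_rpow (min_le_right _ _) hp0.le
      exact (lt_of_le_of_lt this
        (ENNReal.mul_lt_top
          (ENNReal.rpow_lt_top_of_nonneg hp0.le (ENNReal.natCast_ne_top k))
          (measure_spanningSets_lt_top ν k))).ne
    rcases eq_or_ne I 0 with hI0 | hI0
    · rw [hI0]; exact bot_le
    have hIq_netop : I ^ (1/q) ≠ ∞ := ENNReal.rpow_ne_top_of_nonneg (by positivity) hIfin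
    have hIq_ne0 : I ^ (1/q) ≠ 0 := by
      simp only [ne_eq, ENNReal.rpow_eq_zero_iff, not_or]
      constructor
      · rintro ⟨h, -⟩; exact hI0 h
      · rintro ⟨h, -⟩; exact hIfin h
    have main : I ≤ S * I ^ (1/q) := by
      have cq : ∀ y, c y ^ q = min (Φ y) (k:ℝ≥0∞) ^ p := by
        intro y
        rw [hc, ← ENNReal.rpow_mul, hpq.sub_one_mul_conj]
      calc I = ∫⁻ y in B, min (Φ y) k * c y ∂ν := by
              refine lintegral_congr fun y => ?_
              have h1 : p = (1:ℝ) + (p - 1) := by ring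
              calc min (Φ y) (k:ℝ≥0∞) ^ p
                  = min (Φ y) (k:ℝ≥0∞) ^ ((1:ℝ) + (p-1)) := by rw [← h1]
                _ = min (Φ y) (k:ℝ≥0∞) ^ (1:ℝ) * min (Φ y) (k:ℝ≥0∞) ^ (p-1) :=
                    ENNReal.rpow_add_of_nonneg _ _ zero_le_one (by linarith)
                _ = min (Φ y) (k:ℝ≥0∞) * c y := by rw [ENNReal.rpow_one]
        _ ≤ ∫⁻ y in B, Φ y * c y ∂ν :=
              lintegral_mono fun y => mul_le_mul_left (min_le_left _ _) _
        _ = ∫⁻ y in B, ∫⁻ x, f x y * c y ∂μ ∂ν := by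
              refine lintegral_congr fun y => ?_
              exact (lintegral_mul_const' (c y) _ (hcfin y)).symm
        _ = ∫⁻ x, ∫⁻ y in B, f x y * c y ∂ν ∂μ := by
              refine lintegral_lintegral_swap ?_
              exact ((hf.comp measurable_swap).mul (hcm.comp measurable_fst)).aemeasurable
        _ ≤ ∫⁻ x, (∫⁻ y in B, (f x y) ^ p ∂ν) ^ (1/p) *
              (∫⁻ y in B, c y ^ q ∂ν) ^ (1/q) ∂μ := by
              refine lintegral_mono fun x => ?_
              have := ENNReal.lintegral_mul_le_Lp_mul_Lq (ν.restrict B) hpq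
                ((hf.comp measurable_prodMk_left).aemeasurable
                  (μ := ν.restrict B) : AEMeasurable (fun y => f x y) _)
                hcm.aemeasurable
              simpa [Function.uncurry] using this
        _ = (∫⁻ x, (∫⁻ y in B, (f x y) ^ p ∂ν) ^ (1/p) ∂μ) * I ^ (1/q) := by
              have : (∫⁻ y in B, c y ^ q ∂ν) = I := by
                rw [hI]; exact lintegral_congr fun y => cq y
              rw [this]
              exact lintegral_mul_const' _ _ hIq_netop
        _ ≤ S * I ^ (1/q) := by
              refine mul_le_mul_left (lintegral_mono fun x => ?_) _
              exact ENNReal.rpow_le_rpow (setLIntegral_le_lintegral _ _) (by positivity)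
    have hIp : I ^ (1/p) ≤ S := by
      have hmul : I ^ (1/p) * I ^ (1/q) ≤ S * I ^ (1/q) := by
        have hsum : (1:ℝ)/p + 1/q = 1 := by
          rw [one_div, one_div]; exact hpq.inv_add_inv_eq_one
        rwa [← ENNReal.rpow_add_of_nonneg _ _ (by positivity) (by positivity),
          hsum, ENNReal.rpow_one]
      exact (ENNReal.mul_le_mul_iff_left hIq_ne0 hIq_netop).mp hmul
    calc I = (I ^ (1/p)) ^ p := by
            rw [← ENNReal.rpow_mul, one_div, inv_mul_cancel₀ hp0.ne', ENNReal.rpow_one]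
      _ ≤ S ^ p := ENNReal.rpow_le_rpow hIp hp0.le
  -- pass to the limit
  have hsupnat : (⨆ m : ℕ, (m : ℝ≥0∞)) = ⊤ := by
    by_contra h
    obtain ⟨m, hm⟩ := ENNReal.exists_nat_gt h
    exact absurd (le_iSup (fun m : ℕ => (m:ℝ≥0∞)) m) hm.not_ge
  set g : ℕ → β → ℝ≥0∞ :=
    fun k => (spanningSets ν k).indicator (fun y => min (Φ y) k ^ p) with hg
  have hgm : ∀ k, Measurable (g k) := fun k =>
    ((ENNReal.continuous_rpow_const.measurable).comp
      (hΦm.min measurable_const)).indicator (measurableSet_spanningSets ν k)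
  have hgmono : Monotone g := by
    intro k l hkl y
    simp only [hg]
    by_cases hy : y ∈ spanningSets ν k
    · rw [Set.indicator_of_mem hy, Set.indicator_of_mem (monotone_spanningSets ν hkl hy)]
      exact ENNReal.rpow_le_rpow (min_le_min le_rfl (Nat.cast_le.mpr hkl)) hp0.le
    · rw [Set.indicator_of_notMem hy]; exact bot_le
  have hgsup : ∀ y, (⨆ k, g k y) = Φ y ^ p := by
    intro y
    obtain ⟨k0, hk0⟩ : ∃ k0, y ∈ spanningSets ν k0 := by
      have : y ∈ ⋃ i, spanningSets ν i := by rw [iUnion_spanningSets]; trivial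
      exact mem_iUnion.mp this
    refine le_antisymm (iSup_le fun k => ?_) ?_
    · refine le_trans (Set.indicator_le_self _ _ y) ?_
      exact ENNReal.rpow_le_rpow (min_le_left _ _) hp0.le
    · have hstep : ∀ m : ℕ, min (Φ y) m ^ p ≤ ⨆ k, g k y := by
        intro m
        refine le_trans ?_ (le_iSup (fun k => g k y) (max m k0))
        simp only [hg]
        rw [Set.indicator_of_mem (monotone_spanningSets ν (le_max_right m k0) hk0)]
        exact ENNReal.rpow_le_rpow
          (min_le_min le_rfl (Nat.cast_le.mpr (le_max_left m k0))) hp0.le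
      rcases eq_or_ne (Φ y) ∞ with hfin | hfin
      · rw [hfin, ENNReal.top_rpow_of_pos hp0, ← hsupnat]
        refine iSup_le fun m => ?_
        refine le_trans ?_ (hstep m)
        rw [min_eq_right (hfin ▸ le_top : (m:ℝ≥0∞) ≤ Φ y)]
        rcases Nat.eq_zero_or_pos m with hm | hm
        · simp [hm]
        · calc (m:ℝ≥0∞) = (m:ℝ≥0∞) ^ (1:ℝ) := (ENNReal.rpow_one _).symm
            _ ≤ (m:ℝ≥0∞) ^ p := ENNReal.rpow_le_rpow_of_exponent_le
                (by exact_mod_cast hm) hp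
      · obtain ⟨m, hm⟩ := ENNReal.exists_nat_gt hfin
        have := hstep m
        rwa [min_eq_left hm.le] at this
  have hlim : ∫⁻ y, Φ y ^ p ∂ν ≤ S ^ p := by
    have : ∫⁻ y, Φ y ^ p ∂ν = ⨆ k, ∫⁻ y, g k y ∂ν := by
      rw [← lintegral_iSup hgm hgmono]
      exact lintegral_congr fun y => (hgsup y).symm
    rw [this]
    refine iSup_le fun k => ?_
    rw [hg]
    rw [lintegral_indicator (measurableSet_spanningSets ν k)]
    exact key k
  calc (∫⁻ y, Φ y ^ p ∂ν) ^ (1/p) ≤ (S ^ p) ^ (1/p) :=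
        ENNReal.rpow_le_rpow hlim (by positivity)
    _ = S := by
        rw [← ENNReal.rpow_mul, mul_one_div, div_self hp0.ne', ENNReal.rpow_one]

end Minkowski



/-- Scaling of a Lebesgue integral over `(0,∞)`. -/
theorem lintegral_Ioi_comp_mul {t : ℝ} (ht : 0 < t) {h : ℝ → ℝ≥0∞} (hh : Measurable h) :
    ∫⁻ ρ in Ioi (0:ℝ), h (t * ρ) = ENNReal.ofReal t⁻¹ * ∫⁻ s in Ioi (0:ℝ), h s := by
  have h1 : ∀ ρ : ℝ, (Ioi (0:ℝ)).indicator (fun ρ => h (t*ρ)) ρ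
      = (Ioi (0:ℝ)).indicator h (t * ρ) := by
    intro ρ
    by_cases hρ : ρ ∈ Ioi (0:ℝ)
    · rw [indicator_of_mem hρ, indicator_of_mem (by exact mul_pos ht hρ)]
    · rw [indicator_of_notMem hρ, indicator_of_notMem]
      simp only [mem_Ioi, not_lt] at hρ ⊢
      exact mul_nonpos_of_nonneg_of_nonpos ht.le hρ
  have hind : Measurable ((Ioi (0:ℝ)).indicator h) := hh.indicator measurableSet_Ioi
  calc ∫⁻ ρ in Ioi (0:ℝ), h (t * ρ)
      = ∫⁻ ρ, (Ioi (0:ℝ)).indicator h (t * ρ) := by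
        rw [← lintegral_indicator measurableSet_Ioi]
        exact lintegral_congr h1
    _ = ∫⁻ y, (Ioi (0:ℝ)).indicator h y ∂(Measure.map (fun x => t * x) volume) :=
        (lintegral_map hind (measurable_const_mul t)).symm
    _ = ENNReal.ofReal t⁻¹ * ∫⁻ s in Ioi (0:ℝ), h s := by
        rw [Real.map_volume_mul_left ht.ne', lintegral_smul_measure, smul_eq_mul,
          abs_of_pos (inv_pos.mpr ht), lintegral_indicator measurableSet_Ioi]

/-- FTC bound pointwise along rays. -/
theorem ftc_ray_bound {n : ℕ} {u : Euc n → ℂ} (hu : ContDiff ℝ (⊤ : ℕ∞) u)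
    (hc : HasCompactSupport u) {x : Euc n} (hx : x ≠ 0) :
    (‖u x‖₊ : ℝ≥0∞) ≤ ∫⁻ t in Ioi (1:ℝ),
      ENNReal.ofReal ‖x‖ * (‖fderiv ℝ u (t • x)‖₊ : ℝ≥0∞) := by
  have hxn : 0 < ‖x‖ := norm_pos_iff.mpr hx
  have hu' : Differentiable ℝ u := hu.differentiable (by simp)
  have hD : Continuous (fderiv ℝ u) := hu.continuous_fderiv (by simp)
  obtain ⟨R, hR⟩ := hc.isBounded.subset_closedBall 0
  set T : ℝ := max 1 ((|R| + 1) / ‖x‖) with hT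
  have hT1 : (1:ℝ) ≤ T := le_max_left _ _
  set φ : ℝ → ℂ := fun t => u (t • x) with hφ
  set φ' : ℝ → ℂ := fun t => (fderiv ℝ u (t • x)) x with hφ'
  have hder : ∀ t : ℝ, HasDerivAt φ (φ' t) t := by
    intro t
    have h1 : HasDerivAt (fun s : ℝ => s • x) x t := by
      simpa using (hasDerivAt_id t).smul_const x
    exact (hu'.differentiableAt.hasFDerivAt).comp_hasDerivAt t h1
  have hcont' : Continuous φ' := by
    have : Continuous fun t : ℝ => fderiv ℝ u (t • x) :=
      hD.comp ((continuous_id.smul continuous_const))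
    exact this.clm_apply continuous_const
  have hzero : φ T = 0 := by
    show u (T • x) = 0
    apply image_eq_zero_of_notMem_tsupport
    intro hmem
    have := hR hmem
    rw [mem_closedBall, dist_zero_right, norm_smul, Real.norm_eq_abs,
      abs_of_pos (lt_of_lt_of_le one_pos hT1)] at this
    have hTge : (|R| + 1) / ‖x‖ ≤ T := le_max_right _ _
    have : |R| + 1 ≤ R := le_trans (by
      calc |R| + 1 = ((|R| + 1) / ‖x‖) * ‖x‖ := by field_simp
        _ ≤ T * ‖x‖ := by exact mul_le_mul_of_nonneg_right hTge hxn.le) this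
    have : (1:ℝ) ≤ 0 := by
      have := le_trans this (le_abs_self R)
      linarith
    linarith
  have hFTC : ∫ s in (1:ℝ)..T, φ' s = φ T - φ 1 :=
    intervalIntegral.integral_eq_sub_of_hasDerivAt (fun s _ => hder s)
      (hcont'.intervalIntegrable 1 T)
  have hux : u x = -∫ s in (1:ℝ)..T, φ' s := by
    rw [hFTC, hzero, zero_sub, neg_neg, hφ]
    simp
  set g : ℝ → ℝ := fun s => ‖x‖ * ‖fderiv ℝ u (s • x)‖ with hgdef
  have hgc : Continuous g := by
    have : Continuous fun s : ℝ => fderiv ℝ u (s • x) :=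
      hD.comp ((continuous_id.smul continuous_const))
    exact continuous_const.mul (this.norm)
  have hnorm : ‖u x‖ ≤ ∫ s in (1:ℝ)..T, g s := by
    rw [hux, norm_neg]
    refine le_trans (intervalIntegral.norm_integral_le_integral_norm hT1) ?_
    refine intervalIntegral.integral_mono_on hT1
      (hcont'.norm.intervalIntegrable 1 T) (hgc.intervalIntegrable 1 T) ?_
    intro s _
    rw [hgdef]
    calc ‖φ' s‖ ≤ ‖fderiv ℝ u (s • x)‖ * ‖x‖ :=
          (fderiv ℝ u (s • x)).le_opNorm x
      _ = ‖x‖ * ‖fderiv ℝ u (s • x)‖ := mul_comm _ _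
  calc (‖u x‖₊ : ℝ≥0∞) = ENNReal.ofReal ‖u x‖ := (ofReal_norm _).symm
    _ ≤ ENNReal.ofReal (∫ s in (1:ℝ)..T, g s) := ENNReal.ofReal_le_ofReal hnorm
    _ = ENNReal.ofReal (∫ s in Ioc (1:ℝ) T, g s) := by
        rw [intervalIntegral.integral_of_le hT1]
    _ = ∫⁻ s in Ioc (1:ℝ) T, ENNReal.ofReal (g s) := by
        refine ofReal_integral_eq_lintegral_ofReal (hgc.integrableOn_Ioc) ?_
        refine Filter.Eventually.of_forall fun s => ?_
        positivity
    _ ≤ ∫⁻ s in Ioi (1:ℝ), ENNReal.ofReal (g s) :=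
        lintegral_mono_set Ioc_subset_Ioi_self
    _ = ∫⁻ s in Ioi (1:ℝ), ENNReal.ofReal ‖x‖ * (‖fderiv ℝ u (s • x)‖₊ : ℝ≥0∞) := by
        refine lintegral_congr fun s => ?_
        simp [hgdef, ENNReal.ofReal_mul (norm_nonneg x), ofReal_norm, enorm_eq_nnnorm]

/-- **Weighted radial Hardy-type inequality in mixed radial–angular norms**
(estimate `eq:interm4`): for `δ > 1 − n/p`,
`‖|x|^δ u‖_{L^p L^{p̃}} ≤ C ‖|x|^{1+δ} ∇u‖_{L^p L^{p̃}}`. -/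
theorem weighted_hardy_mixed_radial_angular
    (n : ℕ) (hn : 2 ≤ n)
    (p pt : ℝ) (hp : 1 ≤ p) (hpt : 1 ≤ pt)
    (δ : ℝ) (hδ : δ > 1 - n / p) :
    ∃ C : ℝ≥0, ∀ u : Euc n → ℂ, ContDiff ℝ (⊤ : ℕ∞) u → HasCompactSupport u →
      mixedNorm n (ENNReal.ofReal p) (ENNReal.ofReal pt)
          (fun x => (‖x‖ ^ δ : ℝ) • u x)
        ≤ C * mixedNorm n (ENNReal.ofReal p) (ENNReal.ofReal pt)
            (fun x => (‖x‖ ^ (1 + δ) : ℝ) * ‖fderiv ℝ u x‖) := by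
  have hp0 : (0:ℝ) < p := lt_of_lt_of_le one_pos hp
  have hpt0 : (0:ℝ) < pt := lt_of_lt_of_le one_pos hpt
  have hqR : (ENNReal.ofReal p).toReal = p := ENNReal.toReal_ofReal hp0.le
  have hqtR : (ENNReal.ofReal pt).toReal = pt := ENNReal.toReal_ofReal hpt0.le
  have qtne0 : ENNReal.ofReal pt ≠ 0 := (ENNReal.ofReal_pos.mpr hpt0).ne'
  have qttop : ENNReal.ofReal pt ≠ ∞ := ENNReal.ofReal_ne_top
  set mR : ℝ := ((n - 1 : ℕ) : ℝ) with hmR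
  have hmn : mR + 1 = (n : ℝ) := by
    rw [hmR]
    have : ((n - 1 : ℕ) : ℝ) = (n : ℝ) - 1 := by
      have h1 : 1 ≤ n := le_trans one_le_two hn
      push_cast [Nat.cast_sub h1]
      ring
    rw [this]; ring
  set e' : ℝ := (1 + δ) * p + mR with he'
  set σ : ℝ := 1 + δ + (n:ℝ) / p with hσdef
  have hσ : 1 < σ := by
    have : 1 - (n:ℝ)/p < δ := hδ
    rw [hσdef]; linarith
  have hσe : (e' + 1) / p = σ := by
    rw [he', hσdef]
    field_simp
    rw [← hmn]; ring
  set K : ℝ≥0∞ := ∫⁻ t in Ioi (1:ℝ), ENNReal.ofReal (t ^ (-σ)) with hKdef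
  have hK : K < ∞ := by
    rw [hKdef]
    exact (integrableOn_Ioi_rpow_of_lt (by linarith : -σ < -1) one_pos).lintegral_lt_top
  refine ⟨K.toNNReal, ?_⟩
  intro u hu hcsupp
  have coeC : (K.toNNReal : ℝ≥0∞) = K := ENNReal.coe_toNNReal hK.ne
  haveI hSfin : IsFiniteMeasure (sphMeasure n) := by unfold sphMeasure; infer_instance
  set D : Euc n → ℝ≥0∞ := fun x => (‖fderiv ℝ u x‖₊ : ℝ≥0∞) with hDdef
  have hDc : Continuous D :=
    ENNReal.continuous_coe.comp (hu.continuous_fderiv (by simp)).nnnorm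
  set J : ℝ → ℝ≥0∞ :=
    fun s => ∫⁻ θ : sphere (0 : Euc n) 1, D (s • (θ : Euc n)) ^ pt ∂(sphMeasure n) with hJdef
  have hsm : Continuous fun st : ℝ × sphere (0 : Euc n) 1 => st.1 • (st.2 : Euc n) :=
    continuous_fst.smul (continuous_subtype_val.comp continuous_snd)
  have hJm : Measurable J := by
    apply Measurable.lintegral_prod_right
      (f := fun s (θ : sphere (0 : Euc n) 1) => D (s • (θ : Euc n)) ^ pt)
    exact (ENNReal.continuous_rpow_const.comp (hDc.comp hsm)).measurable
  set B : ℝ → ℝ≥0∞ := fun s => J s ^ (1/pt) with hBdef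
  have hBm : Measurable B := ENNReal.continuous_rpow_const.measurable.comp hJm
  set V : ℝ → ℝ≥0∞ := fun ρ => ENNReal.ofReal (ρ ^ (mR / p)) with hVdef
  set h : ℝ → ℝ≥0∞ := fun s => ENNReal.ofReal (s ^ e') * B s ^ p with hhdef
  have hhm : Measurable h :=
    (ENNReal.measurable_ofReal.comp (measurable_id.pow_const e')).mul
      (ENNReal.continuous_rpow_const.measurable.comp hBm)
  set RHSval : ℝ≥0∞ := ∫⁻ s in Ioi (0:ℝ), h s with hRHSval
  -- norm of points ρ • θ
  have hnθ : ∀ (ρ : ℝ), 0 < ρ → ∀ θ : sphere (0 : Euc n) 1, ‖ρ • (θ : Euc n)‖ = ρ := by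
    intro ρ hρ θ
    rw [norm_smul, norm_eq_of_mem_sphere, Real.norm_eq_abs, abs_of_pos hρ, mul_one]
  -- pulling constants through the angular norm
  have hpull : ∀ (c : ℝ≥0∞), c ≠ ∞ → ∀ s : ℝ,
      (∫⁻ θ : sphere (0 : Euc n) 1, (c * D (s • (θ : Euc n))) ^ pt ∂(sphMeasure n)) ^ (1/pt)
        = c * B s := by
    intro c hc s
    have : ∀ θ : sphere (0 : Euc n) 1,
        (c * D (s • (θ : Euc n))) ^ pt = c ^ pt * D (s • (θ : Euc n)) ^ pt := fun θ =>
      ENNReal.mul_rpow_of_nonneg _ _ hpt0.le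
    rw [lintegral_congr this,
      lintegral_const_mul' _ _ (ENNReal.rpow_ne_top_of_nonneg hpt0.le hc),
      ENNReal.mul_rpow_of_nonneg _ _ (by positivity), ← ENNReal.rpow_mul,
      mul_one_div, div_self hpt0.ne', ENNReal.rpow_one, hBdef]
  -- arithmetic normal form of the weighted integrand
  have harith : ∀ ρ : ℝ, 0 < ρ → ∀ z : ℝ≥0∞,
      (ENNReal.ofReal (ρ ^ (1+δ)) * z) ^ p * ENNReal.ofReal (ρ ^ (n - 1 : ℕ))
        = ENNReal.ofReal (ρ ^ e') * z ^ p := by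
    intro ρ hρ z
    have h2 : (ρ : ℝ) ^ (n - 1 : ℕ) = ρ ^ mR := by
      rw [hmR, Real.rpow_natCast]
    rw [ENNReal.mul_rpow_of_nonneg _ _ hp0.le,
      ENNReal.ofReal_rpow_of_pos (Real.rpow_pos_of_pos hρ _), h2,
      ← Real.rpow_mul hρ.le, mul_right_comm,
      ← ENNReal.ofReal_mul (Real.rpow_nonneg hρ.le _), ← Real.rpow_add hρ, he']
  -- the weight as a p-th power
  have hV : ∀ ρ : ℝ, 0 < ρ → ENNReal.ofReal (ρ ^ (n - 1 : ℕ)) = V ρ ^ p := by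
    intro ρ hρ
    rw [hVdef, ENNReal.ofReal_rpow_of_pos (Real.rpow_pos_of_pos hρ _),
      ← Real.rpow_mul hρ.le, div_mul_cancel₀ _ hp0.ne', hmR, Real.rpow_natCast]
  -- Claim A
  have hangL : ∀ ρ : ℝ, ρ ∈ Ioi (0:ℝ) →
      angNorm n (ENNReal.ofReal pt) (fun x => (‖x‖ ^ δ : ℝ) • u x) ρ
        ≤ ∫⁻ t in Ioi (1:ℝ), ENNReal.ofReal (ρ ^ (1+δ)) * B (t*ρ) := by
    intro ρ hρ
    have hρ0 : (0:ℝ) < ρ := hρ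
    have hpoint : ∀ θ : sphere (0 : Euc n) 1,
        (‖(‖ρ • (θ : Euc n)‖ ^ δ : ℝ) • u (ρ • (θ : Euc n))‖₊ : ℝ≥0∞)
          ≤ ∫⁻ t in Ioi (1:ℝ), ENNReal.ofReal (ρ ^ (1+δ)) * D ((t*ρ) • (θ : Euc n)) := by
      intro θ
      have hxne : ρ • (θ : Euc n) ≠ 0 := by
        intro h0
        have := hnθ ρ hρ0 θ
        rw [h0, norm_zero] at this
        exact hρ0.ne this
      have hb := ftc_ray_bound hu hcsupp hxne
      calc (‖(‖ρ • (θ : Euc n)‖ ^ δ : ℝ) • u (ρ • (θ : Euc n))‖₊ : ℝ≥0∞)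
          = ENNReal.ofReal (ρ ^ δ) * (‖u (ρ • (θ : Euc n))‖₊ : ℝ≥0∞) := by
            rw [nnnorm_smul, ENNReal.coe_mul, hnθ ρ hρ0 θ, ← enorm_eq_nnnorm,
              Real.enorm_eq_ofReal (Real.rpow_nonneg hρ0.le δ)]
        _ ≤ ENNReal.ofReal (ρ ^ δ) *
              ∫⁻ t in Ioi (1:ℝ), ENNReal.ofReal ‖ρ • (θ : Euc n)‖ *
                D (t • (ρ • (θ : Euc n))) := mul_le_mul_right hb _
        _ = ∫⁻ t in Ioi (1:ℝ), ENNReal.ofReal (ρ ^ (1+δ)) * D ((t*ρ) • (θ : Euc n)) := by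
            rw [← lintegral_const_mul' _ _ ENNReal.ofReal_ne_top]
            refine lintegral_congr fun t => ?_
            rw [hnθ ρ hρ0 θ, smul_smul, ← mul_assoc,
              ← ENNReal.ofReal_mul (Real.rpow_nonneg hρ0.le δ)]
            congr 2
            rw [add_comm, Real.rpow_add_one hρ0.ne' δ]
    rw [angNorm, eLpNorm_eq_lintegral_rpow_enorm_toReal qtne0 qttop, hqtR]
    calc (∫⁻ θ : sphere (0:Euc n) 1,
            (‖(‖ρ • (θ:Euc n)‖ ^ δ : ℝ) • u (ρ • (θ:Euc n))‖₊ : ℝ≥0∞) ^ pt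
            ∂(sphMeasure n)) ^ (1/pt)
        ≤ (∫⁻ θ : sphere (0:Euc n) 1,
            (∫⁻ t in Ioi (1:ℝ), ENNReal.ofReal (ρ ^ (1+δ)) * D ((t*ρ) • (θ:Euc n))) ^ pt
            ∂(sphMeasure n)) ^ (1/pt) := by
          refine ENNReal.rpow_le_rpow (lintegral_mono fun θ => ?_) (by positivity)
          exact ENNReal.rpow_le_rpow (hpoint θ) hpt0.le
      _ ≤ ∫⁻ t in Ioi (1:ℝ),
            (∫⁻ θ : sphere (0:Euc n) 1,
              (ENNReal.ofReal (ρ ^ (1+δ)) * D ((t*ρ) • (θ:Euc n))) ^ pt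
              ∂(sphMeasure n)) ^ (1/pt) := by
          refine lintegral_lintegral_rpow_le (volume.restrict (Ioi (1:ℝ))) (sphMeasure n)
            hpt ?_
          exact measurable_const.mul
            ((hDc.comp ((continuous_fst.mul continuous_const).smul
              (continuous_subtype_val.comp continuous_snd))).measurable)
      _ = ∫⁻ t in Ioi (1:ℝ), ENNReal.ofReal (ρ ^ (1+δ)) * B (t*ρ) :=
          lintegral_congr fun t => hpull _ ENNReal.ofReal_ne_top (t*ρ)
  -- RHS identity
  have hrhs : mixedNorm n (ENNReal.ofReal p) (ENNReal.ofReal pt)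
      (fun x => (‖x‖ ^ (1 + δ) : ℝ) * ‖fderiv ℝ u x‖) = RHSval ^ (1/p) := by
    rw [mixedNorm, if_neg ENNReal.ofReal_ne_top, hqR]
    congr 1
    refine setLIntegral_congr_fun measurableSet_Ioi
      (fun ρ hρ => ?_)
    have hρ0 : (0:ℝ) < ρ := hρ
    have hang : angNorm n (ENNReal.ofReal pt)
        (fun x => (‖x‖ ^ (1 + δ) : ℝ) * ‖fderiv ℝ u x‖) ρ
          = ENNReal.ofReal (ρ ^ (1+δ)) * B ρ := by
      rw [angNorm, eLpNorm_eq_lintegral_rpow_enorm_toReal qtne0 qttop, hqtR,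
        ← hpull (ENNReal.ofReal (ρ ^ (1+δ))) ENNReal.ofReal_ne_top ρ]
      congr 1
      refine lintegral_congr fun θ => ?_
      congr 1
      rw [hnθ ρ hρ0 θ, Real.enorm_eq_ofReal
          (mul_nonneg (Real.rpow_nonneg hρ0.le _) (norm_nonneg _)),
        ENNReal.ofReal_mul (Real.rpow_nonneg hρ0.le _), ofReal_norm, enorm_eq_nnnorm]
    rw [hang, harith ρ hρ0 (B ρ), hhdef]
  -- Step III: the inner integral for each t > 1
  have hstep3 : ∀ t : ℝ, t ∈ Ioi (1:ℝ) →
      (∫⁻ ρ in Ioi (0:ℝ),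
          ((ENNReal.ofReal (ρ ^ (1+δ)) * B (t*ρ)) * V ρ) ^ p) ^ (1/p)
        = ENNReal.ofReal (t ^ (-σ)) * RHSval ^ (1/p) := by
    intro t ht
    have ht0 : (0:ℝ) < t := lt_trans one_pos ht
    have hinner : ∀ ρ : ℝ, ρ ∈ Ioi (0:ℝ) →
        ((ENNReal.ofReal (ρ ^ (1+δ)) * B (t*ρ)) * V ρ) ^ p
          = ENNReal.ofReal (t ^ (-e')) * h (t*ρ) := by
      intro ρ hρ
      have hρ0 : (0:ℝ) < ρ := hρ
      rw [ENNReal.mul_rpow_of_nonneg _ _ hp0.le, ← hV ρ hρ0, harith ρ hρ0 (B (t*ρ))]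
      have hsplit : ρ ^ e' = t ^ (-e') * (t*ρ) ^ e' := by
        rw [Real.mul_rpow ht0.le hρ0.le, ← mul_assoc, ← Real.rpow_add ht0,
          neg_add_cancel, Real.rpow_zero, one_mul]
      rw [hsplit, ENNReal.ofReal_mul (Real.rpow_nonneg ht0.le _), mul_assoc, hhdef]
    rw [setLIntegral_congr_fun measurableSet_Ioi hinner,
      lintegral_const_mul' _ _ ENNReal.ofReal_ne_top,
      lintegral_Ioi_comp_mul ht0 hhm, ← hRHSval, ← mul_assoc,
      ← ENNReal.ofReal_mul (Real.rpow_nonneg ht0.le _)]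
    have hcomb : t ^ (-e') * t⁻¹ = t ^ (-(e'+1)) := by
      rw [← Real.rpow_neg_one t, ← Real.rpow_add ht0]
      ring_nf
    rw [hcomb, ENNReal.mul_rpow_of_nonneg _ _ (by positivity),
      ENNReal.ofReal_rpow_of_pos (Real.rpow_pos_of_pos ht0 _),
      ← Real.rpow_mul ht0.le]
    congr 3
    rw [← hσe]; field_simp
  -- main chain
  calc mixedNorm n (ENNReal.ofReal p) (ENNReal.ofReal pt)
        (fun x => (‖x‖ ^ δ : ℝ) • u x)
      = (∫⁻ ρ in Ioi (0:ℝ),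
          (angNorm n (ENNReal.ofReal pt) (fun x => (‖x‖ ^ δ : ℝ) • u x) ρ) ^ p
            * ENNReal.ofReal (ρ ^ (n-1))) ^ (1/p) := by
        rw [mixedNorm, if_neg ENNReal.ofReal_ne_top, hqR]
    _ ≤ (∫⁻ ρ in Ioi (0:ℝ),
          (∫⁻ t in Ioi (1:ℝ), (ENNReal.ofReal (ρ ^ (1+δ)) * B (t*ρ)) * V ρ) ^ p)
            ^ (1/p) := by
        refine ENNReal.rpow_le_rpow (setLIntegral_mono' measurableSet_Ioi
          fun ρ hρ => ?_) (by positivity)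
        have hρ0 : (0:ℝ) < ρ := hρ
        calc (angNorm n (ENNReal.ofReal pt) (fun x => (‖x‖ ^ δ : ℝ) • u x) ρ) ^ p
              * ENNReal.ofReal (ρ ^ (n-1))
            = (angNorm n (ENNReal.ofReal pt) (fun x => (‖x‖ ^ δ : ℝ) • u x) ρ * V ρ) ^ p := by
              rw [ENNReal.mul_rpow_of_nonneg _ _ hp0.le, hV ρ hρ0]
          _ ≤ ((∫⁻ t in Ioi (1:ℝ), ENNReal.ofReal (ρ ^ (1+δ)) * B (t*ρ)) * V ρ) ^ p :=
              ENNReal.rpow_le_rpow (mul_le_mul_left (hangL ρ hρ) _) hp0.le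
          _ = (∫⁻ t in Ioi (1:ℝ), (ENNReal.ofReal (ρ ^ (1+δ)) * B (t*ρ)) * V ρ) ^ p := by
              rw [lintegral_mul_const' _ _ ENNReal.ofReal_ne_top]
    _ ≤ ∫⁻ t in Ioi (1:ℝ),
          (∫⁻ ρ in Ioi (0:ℝ), ((ENNReal.ofReal (ρ ^ (1+δ)) * B (t*ρ)) * V ρ) ^ p)
            ^ (1/p) := by
        refine lintegral_lintegral_rpow_le (volume.restrict (Ioi (1:ℝ)))
          (volume.restrict (Ioi (0:ℝ))) hp ?_
        refine Measurable.mul (Measurable.mul ?_ ?_) ?_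
        · exact ENNReal.measurable_ofReal.comp
            ((measurable_id.pow_const (1+δ)).comp measurable_snd)
        · exact hBm.comp (measurable_fst.mul measurable_snd)
        · exact ENNReal.measurable_ofReal.comp
            ((measurable_id.pow_const (mR/p)).comp measurable_snd)
    _ = ∫⁻ t in Ioi (1:ℝ), ENNReal.ofReal (t ^ (-σ)) * RHSval ^ (1/p) :=
        setLIntegral_congr_fun measurableSet_Ioi hstep3
    _ = K * RHSval ^ (1/p) := by
        have hfm : Measurable fun t : ℝ => ENNReal.ofReal (t ^ (-σ)) :=
          ENNReal.measurable_ofReal.comp (measurable_id.pow_const (-σ))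
        rw [hKdef]
        exact lintegral_mul_const'' _ hfm.aemeasurable
    _ = ↑K.toNNReal * mixedNorm n (ENNReal.ofReal p) (ENNReal.ofReal pt)
          (fun x => (‖x‖ ^ (1 + δ) : ℝ) * ‖fderiv ℝ u x‖) := by
        rw [coeC, hrhs]
end
end

section
/- Let n ≥ 2, 1 ≤ p̃ < ∞, and let u ∈ C_c^∞(ℝ^n). Define φ(ρ) = ( ∫_{S^{n−1}} |u(ρθ)|^{p̃} dS(θ) )^{1/p̃} for ρ > 0. Then at every ρ > 0 where φ is differentiable and φ(ρ) > 0, one has |φ'(ρ)| ≤ ( ∫_{S^{n−1}} |∇u(ρθ)|^{p̃} dS(θ) )^{1/p̃}, where |∇u| denotes the Euclidean norm of the gradient of u. -/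
set_option autoImplicit false

open MeasureTheory Metric Set

noncomputable section

/-- **Derivative bound for the angular `L^{p̃}` norm profile**: with
`φ(ρ) = (∫_{S^{n-1}} |u(ρθ)|^{p̃} dS(θ))^{1/p̃}`, at every `ρ > 0` where `φ` is
differentiable and positive, `|φ'(ρ)| ≤ (∫_{S^{n-1}} |∇u(ρθ)|^{p̃} dS(θ))^{1/p̃}`. -/
theorem deriv_angular_profile_le
    (n : ℕ) (hn : 2 ≤ n) (pt : ℝ) (hpt1 : 1 ≤ pt)
    (u : Euc n → ℂ) (hu : ContDiff ℝ (⊤ : ℕ∞) u) (hsupp : HasCompactSupport u)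
    (φ : ℝ → ℝ)
    (hφ : φ = fun ρ =>
      (∫ θ : sphere (0 : Euc n) 1, ‖u (ρ • (θ : Euc n))‖ ^ pt ∂(sphMeasure n))
        ^ (1 / pt)) :
    ∀ ρ : ℝ, 0 < ρ → DifferentiableAt ℝ φ ρ → 0 < φ ρ →
      |deriv φ ρ| ≤
        (∫ θ : sphere (0 : Euc n) 1,
            ‖fderiv ℝ u (ρ • (θ : Euc n))‖ ^ pt ∂(sphMeasure n)) ^ (1 / pt) := by
  intro ρ hρ hdiff _
  have hpt0 : (0:ℝ) < pt := one_pos.trans_le hpt1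
  haveI : IsFiniteMeasure (sphMeasure n) := by unfold sphMeasure; infer_instance
  set P : ENNReal := ENNReal.ofReal pt with hPdef
  have hP0 : P ≠ 0 := by simp [hPdef, hpt0]
  have hPtop : P ≠ ⊤ := ENNReal.ofReal_ne_top
  have hP1 : 1 ≤ P := by
    rw [hPdef, ← ENNReal.ofReal_one]
    exact ENNReal.ofReal_le_ofReal hpt1
  have hPre : P.toReal = pt := ENNReal.toReal_ofReal hpt0.le
  -- the family of angular slices of `u`
  set F : ℝ → (sphere (0 : Euc n) 1) → ℂ := fun r θ => u (r • (θ : Euc n)) with hFdef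
  have hFc : ∀ r, Continuous (F r) := fun r =>
    hu.continuous.comp (continuous_subtype_val.const_smul r)
  obtain ⟨Cu, hCu⟩ := hu.continuous.bounded_above_of_compact_support hsupp
  have hFmem : ∀ r, MemLp (F r) P (sphMeasure n) := fun r =>
    MemLp.of_bound (hFc r).aestronglyMeasurable Cu
      (Filter.Eventually.of_forall fun θ => hCu _)
  -- `φ` as an `eLpNorm`
  have hφ' : ∀ r, φ r = (eLpNorm (F r) P (sphMeasure n)).toReal := by
    intro r
    have h := (hFmem r).eLpNorm_eq_integral_rpow_norm hP0 hPtop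
    rw [h, ENNReal.toReal_ofReal
      (Real.rpow_nonneg (integral_nonneg fun θ => Real.rpow_nonneg (norm_nonneg _) _) _),
      hPre]
    simp [hφ, one_div, hFdef]
  -- the angular gradient norm function
  have hfd_cont : Continuous (fderiv ℝ u) := hu.continuous_fderiv (by simp)
  have hfd_supp : HasCompactSupport (fderiv ℝ u) := HasCompactSupport.fderiv (𝕜 := ℝ) hsupp
  have hfd_uc : UniformContinuous (fderiv ℝ u) :=
    hfd_cont.uniformContinuous_of_tendsto_cocompact hfd_supp.is_zero_at_infty
  obtain ⟨Cg, hCg⟩ := hfd_cont.bounded_above_of_compact_support hfd_supp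
  set G : sphere (0 : Euc n) 1 → ℝ := fun θ => ‖fderiv ℝ u (ρ • (θ : Euc n))‖ with hGdef
  have hGc : Continuous G := (hfd_cont.comp (continuous_subtype_val.const_smul ρ)).norm
  have hGmem : MemLp G P (sphMeasure n) :=
    MemLp.of_bound hGc.aestronglyMeasurable Cg
      (Filter.Eventually.of_forall fun θ => by
        simpa [hGdef, Real.norm_eq_abs, abs_norm] using hCg (ρ • (θ : Euc n)))
  have hRHS : (∫ θ : sphere (0 : Euc n) 1,
        ‖fderiv ℝ u (ρ • (θ : Euc n))‖ ^ pt ∂(sphMeasure n)) ^ (1 / pt)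
      = (eLpNorm G P (sphMeasure n)).toReal := by
    have h := hGmem.eLpNorm_eq_integral_rpow_norm hP0 hPtop
    rw [h, ENNReal.toReal_ofReal
      (Real.rpow_nonneg (integral_nonneg fun θ => Real.rpow_nonneg (norm_nonneg _) _) _),
      hPre]
    simp [hGdef, one_div, norm_norm]
  set Cμ : ℝ := ((sphMeasure n Set.univ) ^ (1 / pt)).toReal with hCμdef
  have hCμ0 : 0 ≤ Cμ := ENNReal.toReal_nonneg
  have hμfin : (sphMeasure n Set.univ) ^ (1 / pt) ≠ ⊤ :=
    ENNReal.rpow_ne_top_of_nonneg (by positivity) (measure_ne_top _ _)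
  -- main estimate
  have main : ∀ ε : ℝ, 0 < ε →
      |deriv φ ρ| ≤ (eLpNorm G P (sphMeasure n)).toReal + ε * Cμ := by
    intro ε hε
    obtain ⟨δ, hδpos, hδ⟩ := Metric.uniformContinuous_iff.mp hfd_uc ε hε
    set r := min (δ / 2) ρ with hrdef
    have hrpos : 0 < r := lt_min (by linarith) hρ
    set K : ℝ := (eLpNorm G P (sphMeasure n)).toReal + ε * Cμ with hKdef
    have hK0 : 0 ≤ K := by positivity
    set Λ : ENNReal := eLpNorm G P (sphMeasure n)
        + ENNReal.ofReal ε * (sphMeasure n Set.univ) ^ (1 / pt) with hΛdef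
    have hΛfin : Λ ≠ ⊤ := by
      rw [hΛdef]
      exact ENNReal.add_ne_top.mpr ⟨hGmem.2.ne,
        ENNReal.mul_ne_top ENNReal.ofReal_ne_top hμfin⟩
    have hΛK : Λ.toReal = K := by
      rw [hΛdef, ENNReal.toReal_add hGmem.2.ne
        (ENNReal.mul_ne_top ENNReal.ofReal_ne_top hμfin),
        ENNReal.toReal_mul, ENNReal.toReal_ofReal hε.le, hKdef, hCμdef]
    have hlip : LipschitzOnWith K.toNNReal φ (Metric.ball ρ r) := by
      apply LipschitzOnWith.of_dist_le_mul
      intro a ha b hb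
      rw [Real.coe_toNNReal _ hK0]
      -- pointwise mean value estimate
      have hpw : ∀ x y : ℝ, x ∈ Metric.ball ρ r → y ∈ Metric.ball ρ r →
          ∀ θ : sphere (0 : Euc n) 1, ‖F x θ - F y θ‖ ≤ (G θ + ε) * |x - y| := by
        intro x y hx hy θ
        have hθ : ‖(θ : Euc n)‖ = 1 := by
          have := θ.2
          rwa [mem_sphere_zero_iff_norm] at this
        have hmem : ∀ c : ℝ, c ∈ Metric.ball ρ r →
            c • (θ : Euc n) ∈ Metric.ball (ρ • (θ : Euc n)) δ := by
          intro c hc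
          rw [Metric.mem_ball, dist_eq_norm, ← sub_smul, norm_smul, hθ, mul_one,
            Real.norm_eq_abs]
          have h1 : |c - ρ| < r := by rwa [Metric.mem_ball, Real.dist_eq] at hc
          have h2 : r ≤ δ / 2 := min_le_left _ _
          linarith
        have hbound : ∀ z ∈ Metric.ball (ρ • (θ : Euc n)) δ,
            ‖fderiv ℝ u z‖ ≤ G θ + ε := by
          intro z hz
          have h1 : dist (fderiv ℝ u z) (fderiv ℝ u (ρ • (θ : Euc n))) < ε :=
            hδ (Metric.mem_ball.mp hz)
          have h2 : ‖fderiv ℝ u z‖ ≤ ‖fderiv ℝ u (ρ • (θ : Euc n))‖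
              + ‖fderiv ℝ u z - fderiv ℝ u (ρ • (θ : Euc n))‖ :=
            norm_le_norm_add_norm_sub' _ _
          rw [dist_eq_norm] at h1
          have : G θ = ‖fderiv ℝ u (ρ • (θ : Euc n))‖ := rfl
          linarith
        have hmvt := Convex.norm_image_sub_le_of_norm_fderiv_le
          (f := u) (s := Metric.ball (ρ • (θ : Euc n)) δ)
          (fun z _ => (hu.differentiable (by simp)).differentiableAt)
          hbound (convex_ball _ _) (hmem y hy) (hmem x hx)
        calc ‖F x θ - F y θ‖ ≤ (G θ + ε) * ‖x • (θ : Euc n) - y • (θ : Euc n)‖ := hmvt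
        _ = (G θ + ε) * |x - y| := by
            rw [← sub_smul, norm_smul, hθ, mul_one, Real.norm_eq_abs]
      -- `eLpNorm` estimate of the difference
      have hdiffbound : ∀ x y : ℝ, x ∈ Metric.ball ρ r → y ∈ Metric.ball ρ r →
          eLpNorm (F x - F y) P (sphMeasure n) ≤ ENNReal.ofReal |x - y| * Λ := by
        intro x y hx hy
        calc eLpNorm (F x - F y) P (sphMeasure n)
            ≤ eLpNorm (fun θ => |x - y| • (G θ + ε)) P (sphMeasure n) := by
              apply eLpNorm_mono_real
              intro θ
              have := hpw x y hx hy θ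
              simpa [Pi.sub_apply, smul_eq_mul, mul_comm] using this
          _ = ‖|x - y|‖₊ * eLpNorm (fun θ => G θ + ε) P (sphMeasure n) := by
              rw [show (fun θ => |x - y| • (G θ + ε))
                  = (|x - y| • fun θ => G θ + ε) from rfl]
              exact eLpNorm_const_smul _ _ _ _
          _ ≤ ENNReal.ofReal |x - y|
              * (eLpNorm G P (sphMeasure n) + eLpNorm (fun _ => ε) P (sphMeasure n)) := by
              rw [← enorm_eq_nnnorm, Real.enorm_eq_ofReal (abs_nonneg _)]
              refine mul_le_mul_right ?_ _
              exact eLpNorm_add_le hGc.aestronglyMeasurable aestronglyMeasurable_const hP1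
          _ = ENNReal.ofReal |x - y| * Λ := by
              rw [hΛdef, eLpNorm_const' ε hP0 hPtop, hPre,
                Real.enorm_eq_ofReal hε.le]
      -- triangle inequality for the profile
      have key : ∀ x y : ℝ, φ x ≤ (eLpNorm (F x - F y) P (sphMeasure n)).toReal + φ y := by
        intro x y
        rw [hφ' x, hφ' y]
        have h := eLpNorm_add_le (((hFmem x).sub (hFmem y)).aestronglyMeasurable)
          (hFmem y).aestronglyMeasurable hP1
        have hxy : (F x - F y) + F y = F x := by funext θ; simp
        rw [hxy] at h
        have hfin : eLpNorm (F x - F y) P (sphMeasure n) + eLpNorm (F y) P (sphMeasure n) ≠ ⊤ :=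
          ENNReal.add_ne_top.mpr ⟨((hFmem x).sub (hFmem y)).2.ne, (hFmem y).2.ne⟩
        calc (eLpNorm (F x) P (sphMeasure n)).toReal
            ≤ (eLpNorm (F x - F y) P (sphMeasure n) + eLpNorm (F y) P (sphMeasure n)).toReal :=
              ENNReal.toReal_mono hfin h
          _ = _ := ENNReal.toReal_add ((hFmem x).sub (hFmem y)).2.ne (hFmem y).2.ne
      have habs : |φ a - φ b| ≤ (eLpNorm (F a - F b) P (sphMeasure n)).toReal := by
        rw [abs_sub_le_iff]
        constructor
        · linarith [key a b]
        · have h := key b a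
          rw [eLpNorm_sub_comm] at h
          linarith
      calc dist (φ a) (φ b) = |φ a - φ b| := Real.dist_eq _ _
        _ ≤ (eLpNorm (F a - F b) P (sphMeasure n)).toReal := habs
        _ ≤ (ENNReal.ofReal |a - b| * Λ).toReal := by
            apply ENNReal.toReal_mono (ENNReal.mul_ne_top ENNReal.ofReal_ne_top hΛfin)
            exact hdiffbound a b ha hb
        _ = |a - b| * Λ.toReal := by
            rw [ENNReal.toReal_mul, ENNReal.toReal_ofReal (abs_nonneg _)]
        _ = K * dist a b := by rw [hΛK, Real.dist_eq, mul_comm]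
    have hfd : HasFDerivAt φ
        (ContinuousLinearMap.smulRight (1 : ℝ →L[ℝ] ℝ) (deriv φ ρ)) ρ :=
      (hdiff.hasDerivAt).hasFDerivAt
    have hle := hfd.le_of_lipschitzOn (Metric.ball_mem_nhds ρ hrpos) hlip
    rwa [ContinuousLinearMap.norm_smulRight_apply, norm_one, one_mul, Real.norm_eq_abs,
      Real.coe_toNNReal _ hK0] at hle
  -- conclude by letting `ε → 0`
  rw [hRHS]
  refine le_of_forall_pos_le_add fun ε hε => ?_
  have h := main (ε / (Cμ + 1)) (by positivity)
  have hfrac : ε / (Cμ + 1) * Cμ ≤ ε := by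
    rw [div_mul_eq_mul_div, div_le_iff₀ (by positivity)]
    nlinarith
  linarith
end
end
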